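/- arXiv:1008.1501 — 8 statements merged into one kernel-verified Lean document; each statement's English description precedes it below -/
import Mathlib

section
/- The number of d-equivalence classes of strict linear orders on A equals Σ_{i=1}^{m} (m-1)!/(m-i)!, and this number is strictly less than (m-1)!·e, where e denotes Euler's number. -/
open Finset Filter

/-- A vote (strict linear order) on `m` alternatives, encoded by its position map:
`v x` is the position of alternative `x`, position `0` being the top.
`v` ranks `x` above `y` iff `v x < v y`. -/
abbrev Vote (m : ℕ) := Equiv.Perm (Fin m)

/-- A profile is a list of `n` votes, one per agent. -/
abbrev Profile (m n : ℕ) := Fin n → Vote m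

/-- `n_{xy}[P]`: the number of votes in `P` ranking `x` above `y`. -/
def nAbove {m n : ℕ} (P : Profile m n) (x y : Fin m) : ℕ :=
  (Finset.univ.filter (fun i => P i x < P i y)).card

/-- `adv[P](x,y) = max (0, n_{xy} - n_{yx})` (truncated subtraction on `ℕ`). -/
def adv {m n : ℕ} (P : Profile m n) (x y : Fin m) : ℕ :=
  nAbove P x y - nAbove P y x

/-- The Tideman score `Sc_T[P](a) = Σ_{b ≠ a} adv[P](b,a)`. -/
def ScT {m n : ℕ} (P : Profile m n) (a : Fin m) : ℕ :=
  ∑ b ∈ Finset.univ.filter (fun b => b ≠ a), adv P b a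

/-- The Dodgson Quick score `Sc_Q[P](a) = Σ_{b ≠ a} ⌈adv[P](b,a)/2⌉`. -/
def ScQ {m n : ℕ} (P : Profile m n) (a : Fin m) : ℕ :=
  ∑ b ∈ Finset.univ.filter (fun b => b ≠ a), (adv P b a + 1) / 2

/-- `a` is a Condorcet-tie winner of `P` iff `adv[P](b,a) = 0` for all `b ≠ a`. -/
def CondorcetTieWinner {m n : ℕ} (P : Profile m n) (a : Fin m) : Prop :=
  ∀ b, b ≠ a → adv P b a = 0

/-- `a` is a Condorcet winner of `P` iff `adv[P](a,b) > 0` for all `b ≠ a`. -/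
def CondorcetWinner {m n : ℕ} (P : Profile m n) (a : Fin m) : Prop :=
  ∀ b, b ≠ a → 0 < adv P a b

/-- `w` is obtained from the vote `v` by one swap of neighbouring alternatives
(the alternatives at consecutive positions `p` and `p+1` are exchanged). -/
def AdjSwapVote {m : ℕ} (v w : Vote m) : Prop :=
  ∃ p q : Fin m, (q : ℕ) = (p : ℕ) + 1 ∧ w = v.trans (Equiv.swap p q)

/-- `Q` is obtained from the profile `P` by one adjacent swap in one vote. -/
def AdjSwap {m n : ℕ} (P Q : Profile m n) : Prop :=
  ∃ i : Fin n, AdjSwapVote (P i) (Q i) ∧ ∀ j, j ≠ i → Q j = P j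

/-- `Reach r k P Q`: `Q` can be obtained from `P` by exactly `k` steps of `r`. -/
def Reach {α : Type*} (r : α → α → Prop) : ℕ → α → α → Prop
  | 0, P, Q => P = Q
  | (k+1), P, Q => ∃ R, r P R ∧ Reach r k R Q

/-- The Dodgson score `Sc_D[P](a)`: the minimum number of adjacent swaps needed to
transform `P` into a profile in which `a` is a Condorcet-tie winner. -/
noncomputable def ScD {m n : ℕ} (P : Profile m n) (a : Fin m) : ℕ :=
  sInf {k | ∃ Q, Reach AdjSwap k P Q ∧ CondorcetTieWinner Q a}

/-- Variant of the Dodgson score requiring `a` to become a Condorcet winner. -/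
noncomputable def ScD' {m n : ℕ} (P : Profile m n) (a : Fin m) : ℕ :=
  sInf {k | ∃ Q, Reach AdjSwap k P Q ∧ CondorcetWinner Q a}

/- Voting situations: multisets of votes.  Scores depend only on the voting
situation of a profile, so we define them directly on multisets. -/

/-- Number of votes in the voting situation `S` ranking `x` above `y`. -/
def snAbove {m : ℕ} (S : Multiset (Vote m)) (x y : Fin m) : ℕ :=
  (S.filter (fun v => v x < v y)).card

def sadv {m : ℕ} (S : Multiset (Vote m)) (x y : Fin m) : ℕ :=
  snAbove S x y - snAbove S y x

/-- Tideman score of a voting situation. -/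
def sScT {m : ℕ} (S : Multiset (Vote m)) (a : Fin m) : ℕ :=
  ∑ b ∈ Finset.univ.filter (fun b => b ≠ a), sadv S b a

/-- Dodgson Quick score of a voting situation. -/
def sScQ {m : ℕ} (S : Multiset (Vote m)) (a : Fin m) : ℕ :=
  ∑ b ∈ Finset.univ.filter (fun b => b ≠ a), (sadv S b a + 1) / 2

def sCondorcetTieWinner {m : ℕ} (S : Multiset (Vote m)) (a : Fin m) : Prop :=
  ∀ b, b ≠ a → sadv S b a = 0

/-- One adjacent swap applied to one vote of a voting situation. -/
def sAdjSwap {m : ℕ} (S T : Multiset (Vote m)) : Prop :=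
  ∃ v ∈ S, ∃ w, AdjSwapVote v w ∧ T = w ::ₘ S.erase v

/-- Dodgson score of a voting situation. -/
noncomputable def sScD {m : ℕ} (S : Multiset (Vote m)) (a : Fin m) : ℕ :=
  sInf {k | ∃ T, Reach sAdjSwap k S T ∧ sCondorcetTieWinner T a}

/-- `a` is a Tideman winner (minimal Tideman score). -/
def sTWinner {m : ℕ} (S : Multiset (Vote m)) (a : Fin m) : Prop :=
  ∀ b, sScT S a ≤ sScT S b

/-- `a` is a DQ winner (minimal DQ score). -/
def sQWinner {m : ℕ} (S : Multiset (Vote m)) (a : Fin m) : Prop :=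
  ∀ b, sScQ S a ≤ sScQ S b

/-- `a` is a Dodgson winner (minimal Dodgson score). -/
def sDWinner {m : ℕ} (S : Multiset (Vote m)) (a : Fin m) : Prop :=
  ∀ b, sScD S a ≤ sScD S b

/-- `v` and `w` are `d`-equivalent: for some position `i`, `d` is the `i`-th ranked
alternative of both `v` and `w`, and the sequences of the top `i` ranked
alternatives of `v` and `w` coincide.  (`v.symm j` is the alternative
ranked at position `j`.) -/
def dEquiv {m : ℕ} (d : Fin m) (v w : Vote m) : Prop :=
  ∃ i : Fin m, v.symm i = d ∧ w.symm i = d ∧ ∀ j : Fin m, j ≤ i → v.symm j = w.symm j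

/-! The `d`-class of a vote is determined by the position `k` of `d` together with the injective
sequence of the `k` alternatives ranked above it, and every such pair arises, since an injective
partial ranking extends to a permutation. With `n = m - 1` there are therefore
`Σ_{k ≤ n} n!/(n-k)! = n! Σ_{k ≤ n} 1/k!` classes, and `Σ_{k ≤ n} 1/k! < e`. -/
theorem Function.Surjective.ncard_setOf_fibers {α β : Type*} {f : α → β}
    (hf : Function.Surjective f) :
    {C : Set α | ∃ a, C = {b | f a = f b}}.ncard = Nat.card β := by
  have hrange : {C : Set α | ∃ a, C = {b | f a = f b}} = Set.range (fun y => {b | y = f b}) := by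
    ext C
    constructor
    · rintro ⟨a, rfl⟩
      exact ⟨f a, rfl⟩
    · rintro ⟨y, rfl⟩
      obtain ⟨a, rfl⟩ := hf y
      exact ⟨a, rfl⟩
  rw [hrange, Set.ncard_range_of_injective]
  intro y y' h
  obtain ⟨a, rfl⟩ := hf y
  exact (Set.ext_iff.mp h a).mp rfl |>.symm

theorem sigma_finEmbedding_eq_iff {m : ℕ} {X : Type*} {p q : Σ k : Fin m, Fin k ↪ X} :
    p = q ↔ p.1 = q.1 ∧
      ∀ j (hp : j < (p.1 : ℕ)) (hq : j < (q.1 : ℕ)), p.2 ⟨j, hp⟩ = q.2 ⟨j, hq⟩ := by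
  obtain ⟨k, f⟩ := p
  obtain ⟨l, g⟩ := q
  constructor
  · rintro ⟨⟩
    exact ⟨rfl, fun _ _ _ => rfl⟩
  · rintro ⟨rfl, h⟩
    congr
    ext j
    exact h j j.2 j.2

section Prefix

variable {m : ℕ} (d : Fin m)

def prefixAbove (v : Vote m) : Σ k : Fin m, Fin k ↪ {x : Fin m // x ≠ d} :=
  ⟨v d, ⟨fun j => ⟨v.symm (Fin.castLE (v d).isLt.le j),
      fun h => j.isLt.ne (congrArg Fin.val (v.symm_apply_eq.mp h))⟩,
    fun _ _ h => Fin.castLE_injective _ (v.symm.injective (congrArg Subtype.val h))⟩⟩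

theorem prefixAbove_snd_apply (v : Vote m) (j : Fin (prefixAbove d v).1) :
    ((prefixAbove d v).2 j : Fin m) = v.symm (Fin.castLE (v d).isLt.le j) := rfl

theorem prefixAbove_eq_iff (v w : Vote m) :
    prefixAbove d v = prefixAbove d w ↔ v d = w d ∧ ∀ j < v d, v.symm j = w.symm j := by
  rw [sigma_finEmbedding_eq_iff]
  refine and_congr_right fun hvw => ⟨fun h j hj => congrArg Subtype.val (h j hj (hvw ▸ hj)),
    fun h j hp _ => Subtype.ext (h ⟨j, hp.trans (v d).isLt⟩ hp)⟩

theorem dEquiv_iff (v w : Vote m) :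
    dEquiv d v w ↔ v d = w d ∧ ∀ j < v d, v.symm j = w.symm j := by
  have hpos : ∀ (u : Vote m) i, u.symm i = d ↔ i = u d := fun u _ => u.symm_apply_eq
  simp only [dEquiv, hpos, exists_eq_left]
  refine and_congr_right fun hvw => ⟨fun h j hj => h j hj.le, fun h j hj => ?_⟩
  rcases hj.lt_or_eq with hj | rfl
  · exact h j hj
  · rw [Equiv.symm_apply_apply, hvw, Equiv.symm_apply_apply]

theorem dEquiv_iff_prefixAbove_eq (v w : Vote m) :
    dEquiv d v w ↔ prefixAbove d v = prefixAbove d w :=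
  (dEquiv_iff d v w).trans (prefixAbove_eq_iff d v w).symm

theorem prefixAbove_surjective : Function.Surjective (prefixAbove d) := by
  rintro ⟨k, e⟩
  set f : Fin (k + 1) → Fin m := Fin.snoc (fun j => (e j : Fin m)) d
  have hf : Function.Injective f :=
    Fin.snoc_injective_of_injective (Subtype.val_injective.comp e.injective)
      (by rintro ⟨j, hj⟩; exact (e j).2 hj)
  obtain ⟨σ, hσ⟩ := Equiv.Perm.exists_extending_pair f (Fin.castLE k.isLt) hf
    (Fin.castLE_injective _)
  have hσd : σ d = k := by simpa [f, Fin.ext_iff] using hσ (Fin.last k)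
  refine ⟨σ, sigma_finEmbedding_eq_iff.mpr ⟨hσd, fun j hp hq => Subtype.ext ?_⟩⟩
  rw [prefixAbove_snd_apply, Equiv.symm_apply_eq]
  have hσj := hσ (Fin.castSucc ⟨j, hq⟩)
  rw [show f (Fin.castSucc ⟨j, hq⟩) = e ⟨j, hq⟩ from Fin.snoc_castSucc ..] at hσj
  rw [hσj]
  rfl

theorem card_prefixAbove : Nat.card (Σ k : Fin m, Fin k ↪ {x : Fin m // x ≠ d}) =
    ∑ k ∈ range m, (m - 1).descFactorial k := by
  rw [Nat.card_eq_fintype_card, Fintype.card_sigma, ← Fin.sum_univ_eq_sum_range]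
  simp [Fintype.card_embedding_eq]

theorem ncard_dEquiv_classes :
    {C : Set (Vote m) | ∃ v : Vote m, C = {w | dEquiv d v w}}.ncard =
      ∑ k ∈ range m, (m - 1).descFactorial k := by
  simp_rw [dEquiv_iff_prefixAbove_eq]
  rw [(prefixAbove_surjective d).ncard_setOf_fibers, card_prefixAbove]

end Prefix

open scoped Nat

theorem Nat.sum_Icc_factorial_div_eq_sum_descFactorial (n : ℕ) :
    ∑ i ∈ Icc 1 (n + 1), n ! / (n + 1 - i)! = ∑ k ∈ range (n + 1), n.descFactorial k := by
  rw [← Ico_add_one_right_eq_Icc, sum_Ico_eq_sum_range]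
  refine sum_congr (by simp) fun k hk => ?_
  rw [Nat.descFactorial_eq_div (Nat.lt_succ_iff.mp (mem_range.mp hk))]
  congr 2
  omega

theorem Nat.sum_range_descFactorial_lt_factorial_mul_exp_one (n : ℕ) :
    ((∑ k ∈ range (n + 1), n.descFactorial k : ℕ) : ℝ) < n ! * Real.exp 1 := by
  have hdesc : ∀ k ∈ range (n + 1), (n.descFactorial k : ℝ) = n ! / (n - k)! := fun k hk => by
    rw [eq_div_iff (by positivity), mul_comm]
    exact_mod_cast Nat.factorial_mul_descFactorial (Nat.lt_succ_iff.mp (mem_range.mp hk))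
  calc ((∑ k ∈ range (n + 1), n.descFactorial k : ℕ) : ℝ)
      = ∑ k ∈ range (n + 1), (n ! : ℝ) / k ! := by
        rw [Nat.cast_sum, sum_congr rfl hdesc, ← sum_range_reflect (fun k => (n ! : ℝ) / k !) (n + 1)]
        simp only [Nat.add_sub_cancel]
    _ = n ! * ∑ k ∈ range (n + 1), 1 ^ k / (k ! : ℝ) := by
        simp [mul_sum, div_eq_mul_inv]
    _ < n ! * ∑ k ∈ range (n + 2), 1 ^ k / (k ! : ℝ) := by
        gcongr
        rw [sum_range_succ _ (n + 1)]
        simp only [one_pow, lt_add_iff_pos_right]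
        positivity
    _ ≤ n ! * Real.exp 1 := by
        gcongr
        exact Real.sum_le_exp_of_nonneg zero_le_one _

theorem stmt_0_general {m : ℕ} (d : Fin m) :
    Set.ncard {C : Set (Vote m) | ∃ v : Vote m, C = {w | dEquiv d v w}} =
      ∑ i ∈ Finset.Icc 1 m, Nat.factorial (m - 1) / Nat.factorial (m - i) ∧
    (Set.ncard {C : Set (Vote m) | ∃ v : Vote m, C = {w | dEquiv d v w}} : ℝ) <
      Nat.factorial (m - 1) * Real.exp 1 := by
  obtain ⟨n, rfl⟩ := Nat.exists_eq_add_one_of_ne_zero d.pos.ne'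
  rw [ncard_dEquiv_classes, Nat.add_sub_cancel]
  exact ⟨(Nat.sum_Icc_factorial_div_eq_sum_descFactorial n).symm,
    Nat.sum_range_descFactorial_lt_factorial_mul_exp_one n⟩

/-- The number of `d`-equivalence classes of strict linear orders on the `m`
alternatives equals `Σ_{i=1}^{m} (m-1)!/(m-i)!`, and is strictly less than
`(m-1)! · e`. -/
theorem stmt_0 {m : ℕ} (hm : 1 ≤ m) (d : Fin m) :
    Set.ncard {C : Set (Vote m) | ∃ v : Vote m, C = {w | dEquiv d v w}} =
      ∑ i ∈ Finset.Icc 1 m, Nat.factorial (m - 1) / Nat.factorial (m - i) ∧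
    (Set.ncard {C : Set (Vote m) | ∃ v : Vote m, C = {w | dEquiv d v w}} : ℝ) <
      Nat.factorial (m - 1) * Real.exp 1 :=
  stmt_0_general d
end

section
/- Let P be a profile containing at least one vote equal to ṽ, and let P' be the profile obtained from P by replacing one vote equal to ṽ with a vote equal to v. Then Sc_T[P'](z) − Sc_T[P'](a) ≥ Sc_T[P](z) − Sc_T[P](a) + 1. -/
open Finset Filter

lemma nAbove_update_int {m n : ℕ} (P : Profile m n) (i₀ : Fin n) (w : Vote m) (x y : Fin m) :
    (nAbove (Function.update P i₀ w) x y : ℤ) =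
      (nAbove P x y : ℤ) - (if P i₀ x < P i₀ y then 1 else 0)
        + (if w x < w y then 1 else 0) := by
  unfold nAbove
  rw [Finset.card_filter, Finset.card_filter]
  push_cast
  rw [← Finset.add_sum_erase _
        (fun i => if Function.update P i₀ w i x < Function.update P i₀ w i y then (1:ℤ) else 0)
        (Finset.mem_univ i₀),
      ← Finset.add_sum_erase _ (fun i => if P i x < P i y then (1:ℤ) else 0)
        (Finset.mem_univ i₀)]
  simp only [Function.update_self]
  rw [Finset.sum_congr rfl (fun i hi => by
    rw [Function.update_of_ne (Finset.ne_of_mem_erase hi)])]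
  ring

lemma filter_ne_split {m : ℕ} {a z : Fin m} (haz : a ≠ z) (f : Fin m → ℤ) :
    ∑ b ∈ Finset.univ.filter (fun b => b ≠ z), f b
      = f a + ∑ b ∈ Finset.univ.filter (fun b => b ≠ a ∧ b ≠ z), f b := by
  have h : Finset.univ.filter (fun b : Fin m => b ≠ z)
      = insert a (Finset.univ.filter fun b => b ≠ a ∧ b ≠ z) := by
    ext b
    simp only [Finset.mem_filter, Finset.mem_univ, true_and, Finset.mem_insert]
    constructor
    · intro h
      by_cases hb : b = a
      · exact Or.inl hb
      · exact Or.inr ⟨hb, h⟩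
    · rintro (rfl | ⟨_, h⟩)
      · exact haz
      · exact h
  rw [h, Finset.sum_insert (by simp)]

/-- Replacing one vote of type `ṽ` (ranking `z` first and `a` last) by a vote of
type `v` (ranking `a` first and `z` last) increases `Sc_T(z) − Sc_T(a)` by at
least one. -/
theorem stmt_1 {m n : ℕ} (hm : 2 ≤ m) (a z : Fin m) (haz : a ≠ z)
    (v vt : Vote m) (hva : (v a : ℕ) = 0) (hvz : (v z : ℕ) = m - 1)
    (hvt : ∀ x, vt x = (v x).rev)
    (P : Profile m n) (i₀ : Fin n) (hP : P i₀ = vt) :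
    (ScT P z : ℤ) - ScT P a + 1 ≤
      (ScT (Function.update P i₀ v) z : ℤ) - ScT (Function.update P i₀ v) a := by
  set Q := Function.update P i₀ v with hQdef
  have hvtlt : ∀ x y : Fin m, (vt x < vt y ↔ v y < v x) := by
    intro x y
    rw [hvt, hvt]
    exact Fin.rev_lt_rev
  have hvlt_a : ∀ x : Fin m, x ≠ a → v a < v x := by
    intro x hx
    have h1 : (v x : ℕ) ≠ (v a : ℕ) := fun h =>
      hx (v.injective (Fin.val_injective h))
    rw [Fin.lt_def]
    omega
  have hvlt_z : ∀ x : Fin m, x ≠ z → v x < v z := by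
    intro x hx
    have h1 : (v x : ℕ) ≠ (v z : ℕ) := fun h =>
      hx (v.injective (Fin.val_injective h))
    have h2 : (v x : ℕ) < m := (v x).is_lt
    rw [Fin.lt_def]
    omega
  -- key shift lemma
  have key : ∀ x y : Fin m, v x < v y →
      (nAbove Q x y : ℤ) = nAbove P x y + 1 ∧ (nAbove Q y x : ℤ) = nAbove P y x - 1 := by
    intro x y h
    have hvt1 : ¬ (P i₀ x < P i₀ y) := by
      rw [hP, hvtlt]
      exact h.asymm
    have hvt2 : P i₀ y < P i₀ x := by
      rw [hP, hvtlt]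
      exact h
    have h1 := nAbove_update_int P i₀ v x y
    have h2 := nAbove_update_int P i₀ v y x
    rw [if_neg hvt1, if_pos h] at h1
    rw [if_pos hvt2, if_neg h.asymm] at h2
    exact ⟨by linarith, by linarith⟩
  have kaz := key a z (hvlt_a z haz.symm)
  -- bracket equality for the pair (a,z)
  have hbr : (adv Q a z : ℤ) - adv Q z a = (adv P a z : ℤ) - adv P z a + 2 := by
    unfold adv
    omega
  -- termwise bounds for b ∉ {a,z}
  have hterm : ∀ b : Fin m, b ≠ a → b ≠ z →
      (adv P b z : ℤ) - adv P b a ≤ (adv Q b z : ℤ) - adv Q b a := by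
    intro b hba hbz
    have k1 := key b z (hvlt_z b hbz)
    have k2 := key a b (hvlt_a b hba)
    unfold adv
    omega
  -- rewrite the scores as sums
  unfold ScT
  push_cast
  rw [filter_ne_split haz (fun b => (adv P b z : ℤ)),
      filter_ne_split haz (fun b => (adv Q b z : ℤ)),
      filter_ne_split haz.symm (fun b => (adv P b a : ℤ)),
      filter_ne_split haz.symm (fun b => (adv Q b a : ℤ))]
  have hset : Finset.univ.filter (fun b : Fin m => b ≠ z ∧ b ≠ a)
      = Finset.univ.filter (fun b : Fin m => b ≠ a ∧ b ≠ z) := by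
    ext b
    simp only [Finset.mem_filter, Finset.mem_univ, true_and]
    tauto
  rw [hset]
  have hsum : ∑ b ∈ Finset.univ.filter (fun b : Fin m => b ≠ a ∧ b ≠ z),
        ((adv P b z : ℤ) - adv P b a)
      ≤ ∑ b ∈ Finset.univ.filter (fun b : Fin m => b ≠ a ∧ b ≠ z),
        ((adv Q b z : ℤ) - adv Q b a) := by
    apply Finset.sum_le_sum
    intro b hb
    simp only [Finset.mem_filter, Finset.mem_univ, true_and] at hb
    exact hterm b hb.1 hb.2
  rw [Finset.sum_sub_distrib, Finset.sum_sub_distrib] at hsum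
  linarith
end

section
/- Let P be a profile containing at least one vote equal to ṽ, and let P' be the profile obtained from P by replacing one vote equal to ṽ with a vote equal to v. Then Sc_D[P'](z) − Sc_D[P'](a) ≥ Sc_D[P](z) − Sc_D[P](a) + 1. -/
open Finset Filter

section Aux

variable {m n : ℕ}

lemma Reach_snoc {α : Type*} {r : α → α → Prop} :
    ∀ {k : ℕ} {P Q : α}, Reach r (k+1) P Q → ∃ R, Reach r k P R ∧ r R Q := by
  intro k
  induction k with
  | zero =>
    rintro P Q ⟨R, hPR, hRQ⟩
    have : R = Q := hRQ
    subst this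
    exact ⟨P, rfl, hPR⟩
  | succ k ih =>
    rintro P Q ⟨R, hPR, hRQ⟩
    obtain ⟨S, hRS, hSQ⟩ := ih hRQ
    exact ⟨S, ⟨R, hPR, hRS⟩, hSQ⟩

lemma nAbove_le_of_eq_off {P Q : Profile m n} {i : Fin n}
    (h : ∀ j, j ≠ i → P j = Q j) (x y : Fin m) :
    nAbove P x y ≤ nAbove Q x y + 1 := by
  have hsub : (univ.filter (fun j => P j x < P j y)) ⊆
      insert i (univ.filter (fun j => Q j x < Q j y)) := by
    intro j hj
    simp only [mem_filter, mem_univ, true_and] at hj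
    rcases eq_or_ne j i with rfl | hji
    · exact mem_insert_self _ _
    · refine mem_insert_of_mem ?_
      simp only [mem_filter, mem_univ, true_and]
      rw [← h j hji]; exact hj
  calc nAbove P x y ≤ _ := Finset.card_le_card hsub
    _ ≤ nAbove Q x y + 1 := Finset.card_insert_le _ _

/-- If `P` and `Q` agree off `i`, `P i` ranks `x` above `y` and `Q i` does not,
then the `x`-over-`y` count of `P` is one more than that of `Q`. -/
lemma nAbove_eq_succ {P Q : Profile m n} {i : Fin n}
    (h : ∀ j, j ≠ i → P j = Q j) {x y : Fin m}
    (hP : P i x < P i y) (hQ : ¬ Q i x < Q i y) :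
    nAbove P x y = nAbove Q x y + 1 := by
  have hset : (univ.filter (fun j => P j x < P j y)) =
      insert i (univ.filter (fun j => Q j x < Q j y)) := by
    ext j
    simp only [mem_filter, mem_univ, true_and, mem_insert]
    rcases eq_or_ne j i with rfl | hji
    · simp [hP]
    · rw [h j hji]; simp [hji]
  have hnot : i ∉ univ.filter (fun j => Q j x < Q j y) := by
    simp [hQ]
  rw [nAbove, nAbove, hset, Finset.card_insert_of_notMem hnot]

lemma adv_le_of_top {Q Q' : Profile m n} {i₀ : Fin n}
    (hoff : ∀ j, j ≠ i₀ → Q j = Q' j) {x b : Fin m} (htop : Q i₀ x < Q i₀ b) :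
    adv Q b x ≤ adv Q' b x := by
  have h1 : nAbove Q b x ≤ nAbove Q' b x := by
    refine Finset.card_le_card ?_
    intro j hj
    simp only [mem_filter, mem_univ, true_and] at hj ⊢
    rcases eq_or_ne j i₀ with rfl | hji
    · exact absurd hj (not_lt.2 (le_of_lt htop))
    · rw [← hoff j hji]; exact hj
  have h2 : nAbove Q' x b ≤ nAbove Q x b := by
    refine Finset.card_le_card ?_
    intro j hj
    simp only [mem_filter, mem_univ, true_and] at hj ⊢
    rcases eq_or_ne j i₀ with rfl | hji
    · exact htop
    · rw [hoff j hji]; exact hj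
  unfold adv
  omega

/-- Simulation: any swap sequence from `P'` can be mimicked from any profile `P`
agreeing with `P'` off `i₀`, never touching vote `i₀`. -/
lemma sim (i₀ : Fin n) :
    ∀ (k : ℕ) (P' Q' : Profile m n), Reach AdjSwap k P' Q' →
    ∀ P : Profile m n, (∀ j, j ≠ i₀ → P j = P' j) →
    ∃ k', k' ≤ k ∧ ∃ Q : Profile m n, Reach AdjSwap k' P Q ∧
      (∀ j, j ≠ i₀ → Q j = Q' j) ∧ Q i₀ = P i₀ ∧ (k' = k → Q' i₀ = P' i₀) := by
  intro k
  induction k with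
  | zero =>
    intro P' Q' hR P hP
    have hPQ : P' = Q' := hR
    subst hPQ
    exact ⟨0, le_rfl, P, rfl, hP, rfl, fun _ => rfl⟩
  | succ k ih =>
    rintro P' Q' ⟨R', hstep, hRQ⟩ P hP
    obtain ⟨i, hsw, hoff⟩ := hstep
    rcases eq_or_ne i i₀ with rfl | hii
    · -- the swap happens at vote i₀: skip it
      have hP2 : ∀ j, j ≠ i → P j = R' j := fun j hj =>
        (hP j hj).trans (hoff j hj).symm
      obtain ⟨k', hle, Q, hreach, hoffQ, hQi, _⟩ := ih R' Q' hRQ P hP2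
      exact ⟨k', by omega, Q, hreach, hoffQ, hQi, fun h => by omega⟩
    · -- mimic the swap
      set R : Profile m n := Function.update P i (R' i) with hRdef
      have hswR : AdjSwap P R := by
        refine ⟨i, ?_, fun j hj => Function.update_of_ne hj _ _⟩
        rw [hRdef, Function.update_self, hP i hii]
        exact hsw
      have hP2 : ∀ j, j ≠ i₀ → R j = R' j := by
        intro j hj
        rcases eq_or_ne j i with rfl | hji
        · rw [hRdef, Function.update_self]
        · rw [hRdef, Function.update_of_ne hji, hP j hj, hoff j hji]
      obtain ⟨k', hle, Q, hreach, hoffQ, hQi, hlast⟩ := ih R' Q' hRQ R hP2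
      refine ⟨k' + 1, by omega, Q, ⟨R, hswR, hreach⟩, hoffQ, ?_, ?_⟩
      · rw [hQi, hRdef, Function.update_of_ne (Ne.symm hii)]
      · intro h
        have hk : k' = k := by omega
        rw [hlast hk, hoff i₀ (Ne.symm hii)]

/-- From any profile one can reach a profile in which `x` tops every vote. -/
lemma exists_reach_top (x : Fin m) :
    ∀ (N : ℕ) (P : Profile m n), (∑ i, ((P i x : ℕ))) ≤ N →
    ∃ k Q, Reach AdjSwap k P Q ∧ ∀ i, ((Q i) x : ℕ) = 0 := by
  intro N
  induction N with
  | zero =>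
    intro P hP
    refine ⟨0, P, rfl, fun i => ?_⟩
    have := Finset.sum_eq_zero_iff.1 (Nat.le_zero.1 hP) i (mem_univ i)
    exact this
  | succ N ih =>
    intro P hP
    by_cases hall : ∀ i, ((P i) x : ℕ) = 0
    · exact ⟨0, P, rfl, hall⟩
    · push_neg at hall
      obtain ⟨i, hi⟩ := hall
      have hpos : 0 < ((P i x : ℕ)) := Nat.pos_of_ne_zero hi
      have hlt : ((P i x : ℕ)) < m := (P i x).isLt
      set p : Fin m := ⟨(P i x : ℕ) - 1, by omega⟩ with hpdef
      set w : Vote m := (P i).trans (Equiv.swap p (P i x)) with hwdef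
      have hq : ((P i x : ℕ)) = (p : ℕ) + 1 := by simp [hpdef]; omega
      have hsw : AdjSwapVote (P i) w := ⟨p, P i x, hq, rfl⟩
      have hwx : (w x : ℕ) = (p : ℕ) := by
        rw [hwdef]
        simp [Equiv.swap_apply_right]
      set P₂ : Profile m n := Function.update P i w with hP2def
      have hstep : AdjSwap P P₂ := by
        refine ⟨i, ?_, fun j hj => Function.update_of_ne hj _ _⟩
        rw [hP2def, Function.update_self]
        exact hsw
      have hsum : (∑ j, ((P₂ j x : ℕ))) ≤ N := by
        have hfun : (fun j => ((P₂ j x : ℕ))) =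
            Function.update (fun j => ((P j x : ℕ))) i ((w x : ℕ)) := by
          funext j
          rcases eq_or_ne j i with rfl | hji
          · rw [hP2def]; simp
          · rw [hP2def]
            simp [Function.update_of_ne hji]
        rw [hfun, Finset.sum_update_of_mem (mem_univ i)]
        have hold : (∑ j, ((P j x : ℕ))) =
            ((P i x : ℕ)) + ∑ j ∈ univ \ {i}, ((P j x : ℕ)) := by
          rw [Finset.sum_eq_sum_sdiff_singleton_add (mem_univ i)]
          omega
        omega
      obtain ⟨k, Q, hreach, htop⟩ := ih P₂ hsum
      exact ⟨k + 1, Q, ⟨P₂, hstep, hreach⟩, htop⟩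

lemma ct_of_top {Q : Profile m n} {x : Fin m} (h : ∀ i, ((Q i) x : ℕ) = 0) :
    CondorcetTieWinner Q x := by
  intro b hb
  have : nAbove Q b x = 0 := by
    rw [nAbove, Finset.card_eq_zero, Finset.filter_eq_empty_iff]
    intro i _
    simp only [not_lt]
    rw [Fin.le_def, h i]
    exact Nat.zero_le _
  rw [adv, this]
  exact Nat.zero_sub _

lemma scd_set_nonempty (P : Profile m n) (x : Fin m) :
    {k | ∃ Q, Reach AdjSwap k P Q ∧ CondorcetTieWinner Q x}.Nonempty := by
  obtain ⟨k, Q, hreach, htop⟩ := exists_reach_top x (∑ i, ((P i x : ℕ))) P le_rfl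
  exact ⟨k, Q, hreach, ct_of_top htop⟩

/-- Key lemma: if `G` and `B` agree off `i₀`, `x` tops vote `i₀` of `G` and is at
the bottom of vote `i₀` of `B`, then `ScD G x + min 1 (ScD B x) ≤ ScD B x`. -/
lemma key_lemma {x : Fin m} {i₀ : Fin n} {G B : Profile m n}
    (hGB : ∀ j, j ≠ i₀ → G j = B j)
    (hGtop : ((G i₀) x : ℕ) = 0) (hBbot : ((B i₀) x : ℕ) = m - 1) :
    ScD G x + min 1 (ScD B x) ≤ ScD B x := by
  obtain ⟨Q', hreach', hct'⟩ := Nat.sInf_mem (scd_set_nonempty B x)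
  set k : ℕ := ScD B x with hkdef
  obtain ⟨k', hle, Q, hreach, hoffQ, hQi, hlast⟩ := sim i₀ k B Q' hreach' G hGB
  have htopQ : ∀ b, b ≠ x → Q i₀ x < Q i₀ b := by
    intro b hb
    rw [Fin.lt_def, hQi, hGtop]
    have : (G i₀ b : ℕ) ≠ 0 := by
      intro h0
      have : G i₀ b = G i₀ x := by
        apply Fin.ext; rw [h0, hGtop]
      exact hb (EmbeddingLike.apply_eq_iff_eq _ |>.1 this)
    omega
  have hctQ : CondorcetTieWinner Q x := by
    intro b hb
    have := adv_le_of_top hoffQ (htopQ b hb)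
    have h0 := hct' b hb
    omega
  have hGle : ScD G x ≤ k' := Nat.sInf_le ⟨Q, hreach, hctQ⟩
  rcases Nat.eq_zero_or_pos k with hk0 | hkpos
  · simp only [hk0, Nat.min_zero, Nat.add_zero]
    omega
  -- k ≥ 1; goal reduces to ScD G x + 1 ≤ k
  have hmin : min 1 k = 1 := by omega
  rw [hmin]
  rcases lt_or_eq_of_le hle with hlt | heq
  · omega
  -- k' = k: the sequence never touched vote i₀, so there is slack 2 everywhere
  · have hQ'i : Q' i₀ = B i₀ := hlast heq
    have hslack : ∀ b, b ≠ x → nAbove Q b x + 2 ≤ nAbove Q x b := by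
      intro b hb
      have hbot' : Q' i₀ b < Q' i₀ x := by
        rw [Fin.lt_def, hQ'i, hBbot]
        have hlt := (B i₀ b).isLt
        have : (B i₀ b : ℕ) ≠ m - 1 := by
          intro h0
          have : B i₀ b = B i₀ x := by apply Fin.ext; rw [h0, hBbot]
          exact hb (EmbeddingLike.apply_eq_iff_eq _ |>.1 this)
        omega
      have htop := htopQ b hb
      have e1 : nAbove Q' b x = nAbove Q b x + 1 :=
        nAbove_eq_succ (fun j hj => (hoffQ j hj).symm) hbot' (not_lt.2 (le_of_lt htop))
      have e2 : nAbove Q x b = nAbove Q' x b + 1 :=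
        nAbove_eq_succ hoffQ htop (not_lt.2 (le_of_lt hbot'))
      have h0 := hct' b hb
      rw [adv, Nat.sub_eq_zero_iff_le] at h0
      omega
    obtain ⟨k₀, hk₀⟩ : ∃ k₀, k = k₀ + 1 := ⟨k - 1, by omega⟩
    rw [heq, hk₀] at hreach
    obtain ⟨R, hGR, hRQ⟩ := Reach_snoc hreach
    obtain ⟨i, _, hoffR⟩ := hRQ
    have hctR : CondorcetTieWinner R x := by
      intro b hb
      have h1 : nAbove R b x ≤ nAbove Q b x + 1 :=
        nAbove_le_of_eq_off (fun j hj => (hoffR j hj).symm) b x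
      have h2 : nAbove Q x b ≤ nAbove R x b + 1 :=
        nAbove_le_of_eq_off hoffR x b
      have h3 := hslack b hb
      rw [adv, Nat.sub_eq_zero_iff_le]
      omega
    have : ScD G x ≤ k₀ := Nat.sInf_le ⟨R, hGR, hctR⟩
    omega

end Aux

/-- Replacing one vote of type `ṽ` (ranking `z` first and `a` last) by a vote of
type `v` (ranking `a` first and `z` last) increases `Sc_D(z) − Sc_D(a)` by at
least one. -/
theorem stmt_2 {m n : ℕ} (hm : 2 ≤ m) (a z : Fin m) (haz : a ≠ z)
    (v vt : Vote m) (hva : (v a : ℕ) = 0) (hvz : (v z : ℕ) = m - 1)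
    (hvt : ∀ x, vt x = (v x).rev)
    (P : Profile m n) (i₀ : Fin n) (hP : P i₀ = vt) :
    (ScD P z : ℤ) - ScD P a + 1 ≤
      (ScD (Function.update P i₀ v) z : ℤ) - ScD (Function.update P i₀ v) a := by
  set P' : Profile m n := Function.update P i₀ v with hP'def
  have hP'i₀ : P' i₀ = v := by rw [hP'def, Function.update_self]
  have hoff : ∀ j, j ≠ i₀ → P' j = P j := fun j hj => Function.update_of_ne hj _ _
  have hm1 : 0 < m - 1 := by omega
  have hvta : ((P i₀) a : ℕ) = m - 1 := by
    rw [hP, hvt a, Fin.val_rev, hva]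
  have hvtz : ((P i₀) z : ℕ) = 0 := by
    rw [hP, hvt z, Fin.val_rev, hvz]; omega
  -- key lemma for z : G = P, B = P'
  have key_z : ScD P z + min 1 (ScD P' z) ≤ ScD P' z :=
    key_lemma (fun j hj => (hoff j hj).symm) hvtz (by rw [hP'i₀]; exact hvz)
  -- key lemma for a : G = P', B = P
  have key_a : ScD P' a + min 1 (ScD P a) ≤ ScD P a :=
    key_lemma hoff (by rw [hP'i₀]; exact hva) hvta
  by_cases h0 : ScD P' z = 0 ∧ ScD P a = 0
  · -- contradiction: z is a CT winner of P' and a is a CT winner of P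
    exfalso
    obtain ⟨hz0, ha0⟩ := h0
    obtain ⟨Qz, hrz, hctz⟩ := Nat.sInf_mem (scd_set_nonempty P' z)
    rw [show ScD P' z = sInf {k | ∃ Q, Reach AdjSwap k P' Q ∧ CondorcetTieWinner Q z} from rfl] at hz0
    rw [hz0] at hrz
    have : P' = Qz := hrz
    subst this
    obtain ⟨Qa, hra, hcta⟩ := Nat.sInf_mem (scd_set_nonempty P a)
    rw [show ScD P a = sInf {k | ∃ Q, Reach AdjSwap k P Q ∧ CondorcetTieWinner Q a} from rfl] at ha0
    rw [ha0] at hra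
    have : P = Qa := hra
    subst this
    -- counts for the pair (a, z)
    have hPaz : ¬ (P i₀) a < (P i₀) z := by
      rw [Fin.lt_def, hvta, hvtz]; omega
    have hP'az : P' i₀ a < P' i₀ z := by
      rw [Fin.lt_def, hP'i₀, hva, hvz]; omega
    have e1 : nAbove P' a z = nAbove P a z + 1 := nAbove_eq_succ hoff hP'az hPaz
    have e2 : nAbove P z a = nAbove P' z a + 1 :=
      nAbove_eq_succ (fun j hj => (hoff j hj).symm)
        (by rw [Fin.lt_def, hvtz, hvta]; omega)
        (by rw [Fin.lt_def, hP'i₀, hva, hvz]; omega)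
    have h1 : nAbove P' a z ≤ nAbove P' z a := by
      have := hctz a haz
      rwa [adv, Nat.sub_eq_zero_iff_le] at this
    have h2 : nAbove P z a ≤ nAbove P a z := by
      have := hcta z (Ne.symm haz)
      rwa [adv, Nat.sub_eq_zero_iff_le] at this
    omega
  · omega
end

section
/- Fix distinct alternatives a, z ∈ A, an integer k, and n ≥ 1. The number of voting situations with n agents on A for which Sc_T(z) − Sc_T(a) = k is at most C(n + m! − 2, n); in particular, since there are C(n + m! − 1, n) voting situations with n agents in total, the proportion of voting situations for which Sc_T(z) − Sc_T(a) = k is at most (m! − 1)/(n + m! − 1). -/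
open Finset Filter

/-!
Fix a vote `v` ranking `a` immediately above `z`, and let `w` be `v` with `a` and `z` exchanged.
Replacing every copy of `w` in a voting situation by `v` changes only the `a`–`z` majority
margin, so it raises `Sc_T(z) − Sc_T(a)` by exactly twice the number of replaced copies. Hence a
voting situation with prescribed score difference is determined by its image, a voting situation
over the `m! − 1` votes other than `w`, of which there are `C(n + m! − 2, n)`. The proportion
bound is the identity `C(N − 1, n) / C(N, n) = (N − n) / N`.
-/

open Function Equiv

theorem Multiset.countP_map_update_add {α : Type*} [DecidableEq α] (p : α → Prop)
    [DecidablePred p] (v w : α) (S : Multiset α) :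
    (S.map (update id w v)).countP p + (if p w then S.count w else 0) =
      S.countP p + (if p v then S.count w else 0) := by
  induction S using Multiset.induction with
  | empty => simp
  | cons u S ih =>
    have hg : update id w v u = if u = w then v else u := update_apply ..
    rw [Multiset.map_cons, Multiset.countP_cons, Multiset.countP_cons, Multiset.count_cons, hg]
    by_cases hu : u = w
    · subst hu
      by_cases hpu : p u <;> by_cases hpv : p v <;> simp [hpu, hpv] at ih ⊢ <;> omega
    · have hwu : w ≠ u := Ne.symm hu
      by_cases hpu : p u <;> by_cases hpv : p v <;> by_cases hpw : p w <;>
        simp [hu, hwu, hpu, hpv, hpw] at ih ⊢ <;> omega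

theorem Multiset.eq_of_map_update_eq_of_count_eq {α : Type*} [DecidableEq α] {v w : α}
    {S S' : Multiset α} (hmap : S.map (update id w v) = S'.map (update id w v))
    (hw : S.count w = S'.count w) : S = S' := by
  ext u
  have h := countP_map_update_add (u = ·) v w S
  have h' := countP_map_update_add (u = ·) v w S'
  rw [hmap] at h
  simp only [← Multiset.count.eq_1, hw] at h h'
  omega

theorem swap_lt_swap_iff_of_covBy {α : Type*} [LinearOrder α] {p q i : α}
    (hpq : p ⋖ q) (hp : i ≠ p) (hq : i ≠ q) (j : α) :
    (swap p q i < swap p q j ↔ i < j) ∧ (swap p q j < swap p q i ↔ j < i) := by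
  have below : i < q ↔ i < p := ⟨fun h => (hpq.le_of_lt h).lt_of_ne hp, (·.trans hpq.lt)⟩
  have above : p < i ↔ q < i := ⟨fun h => (hpq.ge_of_gt h).lt_of_ne' hq, hpq.lt.trans⟩
  rw [swap_apply_of_ne_of_ne hp hq]
  rcases eq_or_ne j p with rfl | hjp
  · rw [swap_apply_left]; exact ⟨below, above.symm⟩
  rcases eq_or_ne j q with rfl | hjq
  · rw [swap_apply_right]; exact ⟨below.symm, above⟩
  rw [swap_apply_of_ne_of_ne hjp hjq]
  exact ⟨Iff.rfl, Iff.rfl⟩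

theorem Equiv.Perm.exists_apply_eq_apply_eq {α : Type*} [DecidableEq α] {a z p q : α}
    (haz : a ≠ z) (hpq : p ≠ q) : ∃ v : Perm α, v a = p ∧ v z = q := by
  have hz : swap a p z ≠ p := by
    simpa only [swap_apply_left] using (swap a p).injective.ne haz.symm
  exact ⟨(swap a p).trans (swap (swap a p z) q), by simp [swap_apply_of_ne_of_ne hz.symm hpq],
    by simp⟩

theorem Fin.exists_perm_covBy {m : ℕ} {a z : Fin m} (haz : a ≠ z) :
    ∃ v : Perm (Fin m), v a ⋖ v z := by
  have hm : 2 ≤ m := Fin.nontrivial_iff_two_le.1 ⟨⟨a, z, haz⟩⟩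
  obtain ⟨v, hva, hvz⟩ :=
    Perm.exists_apply_eq_apply_eq (p := ⟨0, by omega⟩) (q := ⟨1, hm⟩) haz (by simp [Fin.ext_iff])
  exact ⟨v, by rw [hva, hvz, Fin.covBy_iff]; exact Nat.covBy_iff_add_one_eq.2 rfl⟩

theorem Set.ncard_le_choose_of_injOn_sym_map_update {α : Type*} [Fintype α] [DecidableEq α]
    {v w : α} (hvw : v ≠ w) {n : ℕ} {A : Set (Sym α n)}
    (hA : A.InjOn (Sym.map (update id w v))) :
    A.ncard ≤ (Fintype.card α - 1 + n - 1).choose n := by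
  let f : α → {u // u ≠ w} := fun u => if h : u = w then ⟨v, hvw⟩ else ⟨u, h⟩
  have hf : Subtype.val ∘ f = update id w v := by
    funext u
    by_cases h : u = w <;> simp [f, h]
  have hinj : A.InjOn (Sym.map f) := fun S hS S' hS' h =>
    hA hS hS' (by rw [← hf, ← Sym.map_map, h, Sym.map_map])
  calc A.ncard ≤ (Set.univ : Set (Sym {u // u ≠ w} n)).ncard :=
        Set.ncard_le_ncard_of_injOn _ (fun _ _ => Set.mem_univ _) hinj
    _ = (Fintype.card α - 1 + n - 1).choose n := by
        rw [Set.ncard_univ, Nat.card_eq_fintype_card, Sym.card_sym_eq_choose,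
          Fintype.card_subtype_compl, Fintype.card_subtype_eq]

theorem Nat.cast_choose_add_sub_one_div_cast_choose (n r : ℕ) (hr : 1 ≤ r) :
    ((n + r - 1).choose n : ℝ) / (n + r).choose n = r / (n + r) := by
  have h := Nat.choose_mul_succ_eq (n + r - 1) n
  rw [show n + r - 1 + 1 = n + r by omega, show n + r - n = r by omega] at h
  have hpos : (0 : ℝ) < (n + r).choose n := by exact_mod_cast Nat.choose_pos (by omega)
  rw [div_eq_div_iff hpos.ne' (by positivity), mul_comm (r : ℝ)]
  exact_mod_cast h

section Tideman

variable {m : ℕ}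

theorem snAbove_map_update_add (S : Multiset (Vote m)) (v w : Vote m) (x y : Fin m) :
    snAbove (S.map (update id w v)) x y + (if w x < w y then S.count w else 0) =
      snAbove S x y + (if v x < v y then S.count w else 0) := by
  simp only [snAbove, ← Multiset.countP_eq_card_filter]
  exact Multiset.countP_map_update_add _ v w S

theorem snAbove_map_update_of_iff (S : Multiset (Vote m)) {v w : Vote m} {x y : Fin m}
    (h : w x < w y ↔ v x < v y) :
    snAbove (S.map (update id w v)) x y = snAbove S x y := by
  have := snAbove_map_update_add S v w x y
  rw [if_congr h rfl rfl] at this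
  omega

theorem sScT_sub_sScT {a z : Fin m} (haz : a ≠ z) (T : Multiset (Vote m)) :
    (sScT T z : ℤ) - sScT T a = (snAbove T a z : ℤ) - snAbove T z a +
      ∑ b ∈ (univ.erase a).erase z, ((sadv T b z : ℤ) - sadv T b a) := by
  have hz : a ∈ univ.erase z := mem_erase.2 ⟨haz, mem_univ a⟩
  have ha : z ∈ univ.erase a := mem_erase.2 ⟨haz.symm, mem_univ z⟩
  simp only [sScT, filter_ne', ← add_sum_erase _ _ hz, ← add_sum_erase _ _ ha,
    erase_right_comm (a := z), sum_sub_distrib, sadv]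
  push_cast
  omega

theorem trans_swap_lt_iff {v : Vote m} {a z b : Fin m} (hcov : v a ⋖ v z) (hba : b ≠ a)
    (hbz : b ≠ z) (y : Fin m) :
    (v.trans (swap (v a) (v z)) b < v.trans (swap (v a) (v z)) y ↔ v b < v y) ∧
      (v.trans (swap (v a) (v z)) y < v.trans (swap (v a) (v z)) b ↔ v y < v b) :=
  swap_lt_swap_iff_of_covBy hcov (v.injective.ne hba) (v.injective.ne hbz) (v y)

theorem sScT_sub_sScT_map_update {v w : Vote m} {a z : Fin m} (haz : a ≠ z) (hcov : v a ⋖ v z)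
    (hw : w = v.trans (swap (v a) (v z))) (S : Multiset (Vote m)) :
    (sScT (S.map (update id w v)) z : ℤ) - sScT (S.map (update id w v)) a =
      (sScT S z : ℤ) - sScT S a + 2 * S.count w := by
  have hwa : w a = v z := hw ▸ swap_apply_left _ _
  have hwz : w z = v a := hw ▸ swap_apply_right _ _
  have hsum : ∀ b ∈ (univ.erase a).erase z,
      ((sadv (S.map (update id w v)) b z : ℤ) - sadv (S.map (update id w v)) b a) =
        (sadv S b z : ℤ) - sadv S b a := by
    intro b hb
    obtain ⟨hbz, hba⟩ : b ≠ z ∧ b ≠ a := by simpa using hb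
    have hz := hw ▸ trans_swap_lt_iff hcov hba hbz z
    have ha := hw ▸ trans_swap_lt_iff hcov hba hbz a
    simp only [sadv, snAbove_map_update_of_iff S hz.1, snAbove_map_update_of_iff S hz.2,
      snAbove_map_update_of_iff S ha.1, snAbove_map_update_of_iff S ha.2]
  have haz' := snAbove_map_update_add S v w a z
  have hza' := snAbove_map_update_add S v w z a
  simp only [hwa, hwz, hcov.lt, hcov.lt.not_gt, if_true, if_false] at haz' hza'
  rw [sScT_sub_sScT haz, sScT_sub_sScT haz, sum_congr rfl hsum]
  omega

theorem injOn_sym_map_update_setOf_sScT_sub_eq {v w : Vote m} {a z : Fin m} (haz : a ≠ z)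
    (hcov : v a ⋖ v z) (hw : w = v.trans (swap (v a) (v z))) (n : ℕ) (k : ℤ) :
    Set.InjOn (Sym.map (update id w v)) {S : Sym (Vote m) n |
      (sScT (S : Multiset (Vote m)) z : ℤ) - sScT (S : Multiset (Vote m)) a = k} := by
  intro S hS S' hS' h
  have hmap : (S : Multiset (Vote m)).map (update id w v) = (S' : Multiset (Vote m)).map
      (update id w v) := by
    rw [← Sym.coe_map, h, Sym.coe_map]
  have hcount : (S : Multiset (Vote m)).count w = (S' : Multiset (Vote m)).count w := by
    have hdiff := sScT_sub_sScT_map_update haz hcov hw S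
    have hdiff' := sScT_sub_sScT_map_update haz hcov hw S'
    rw [hmap] at hdiff
    simp only [Set.mem_ofPred_eq] at hS hS'
    omega
  exact Sym.coe_injective (Multiset.eq_of_map_update_eq_of_count_eq hmap hcount)

end Tideman

theorem stmt_3_general {m : ℕ} (a z : Fin m) (haz : a ≠ z) (k : ℤ)
    (n : ℕ) :
    Set.ncard {S : Sym (Vote m) n |
        (sScT (S : Multiset (Vote m)) z : ℤ) - sScT (S : Multiset (Vote m)) a = k} ≤
      Nat.choose (n + Nat.factorial m - 2) n ∧
    (Set.ncard {S : Sym (Vote m) n |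
        (sScT (S : Multiset (Vote m)) z : ℤ) - sScT (S : Multiset (Vote m)) a = k} : ℝ) /
        Nat.choose (n + Nat.factorial m - 1) n ≤
      ((Nat.factorial m : ℝ) - 1) / ((n : ℝ) + Nat.factorial m - 1) := by
  obtain ⟨v, hcov⟩ := Fin.exists_perm_covBy haz
  set w := v.trans (swap (v a) (v z)) with hw
  have hvw : v ≠ w := fun h => hcov.lt.ne (congr($h a).trans (swap_apply_left _ _))
  have hbound := Set.ncard_le_choose_of_injOn_sym_map_update hvw
    (injOn_sym_map_update_setOf_sScT_sub_eq haz hcov hw n k)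
  have hfac : 2 ≤ m.factorial :=
    (Fin.nontrivial_iff_two_le.1 ⟨⟨a, z, haz⟩⟩).trans (Nat.self_le_factorial m)
  rw [Fintype.card_perm, Fintype.card_fin,
    show m.factorial - 1 + n - 1 = n + m.factorial - 2 by omega] at hbound
  refine ⟨hbound, ?_⟩
  have hratio := Nat.cast_choose_add_sub_one_div_cast_choose n (m.factorial - 1) (by omega)
  rw [show n + (m.factorial - 1) - 1 = n + m.factorial - 2 by omega,
    show n + (m.factorial - 1) = n + m.factorial - 1 by omega,
    Nat.cast_sub (by omega : 1 ≤ m.factorial), Nat.cast_one, ← add_sub_assoc] at hratio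
  calc _ ≤ ((n + m.factorial - 2).choose n : ℝ) / (n + m.factorial - 1).choose n := by gcongr
    _ = _ := hratio

/-- For fixed distinct alternatives `a, z`, a fixed integer `k` and `n ≥ 1`, the
number of voting situations with `n` agents for which `Sc_T(z) − Sc_T(a) = k`
is at most `C(n + m! − 2, n)`; in particular, since there are
`C(n + m! − 1, n)` voting situations in total, the proportion of voting
situations for which `Sc_T(z) − Sc_T(a) = k` is at most
`(m! − 1)/(n + m! − 1)`. -/
theorem stmt_3 {m : ℕ} (hm : 2 ≤ m) (a z : Fin m) (haz : a ≠ z) (k : ℤ)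
    (n : ℕ) (hn : 1 ≤ n) :
    Set.ncard {S : Sym (Vote m) n |
        (sScT (S : Multiset (Vote m)) z : ℤ) - sScT (S : Multiset (Vote m)) a = k} ≤
      Nat.choose (n + Nat.factorial m - 2) n ∧
    (Set.ncard {S : Sym (Vote m) n |
        (sScT (S : Multiset (Vote m)) z : ℤ) - sScT (S : Multiset (Vote m)) a = k} : ℝ) /
        Nat.choose (n + Nat.factorial m - 1) n ≤
      ((Nat.factorial m : ℝ) - 1) / ((n : ℝ) + Nat.factorial m - 1) :=
  stmt_3_general a z haz k n
end

section
/- Fix distinct alternatives a, z ∈ A, an integer k, and n ≥ 1. The number of voting situations with n agents on A for which Sc_D(z) − Sc_D(a) = k is at most C(n + m! − 2, n); in particular, since there are C(n + m! − 1, n) voting situations with n agents in total, the proportion of voting situations for which Sc_D(z) − Sc_D(a) = k is at most (m! − 1)/(n + m! − 1). -/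
open Finset Filter

-- Part 1: positions, margins, requirements, covers, OptD, basic lemmas
namespace DodgsonAux

variable {m : ℕ}

/-- position of alternative `x` in vote `v`, as a natural number. -/
def pos (v : Vote m) (x : Fin m) : ℕ := (v x : ℕ)

lemma pos_lt (v : Vote m) (x : Fin m) : pos v x < m := (v x).isLt

lemma pos_inj {v : Vote m} {x y : Fin m} (h : pos v x = pos v y) : x = y :=
  v.injective (Fin.val_injective h)

lemma pos_ne {v : Vote m} {x y : Fin m} (h : x ≠ y) : pos v x ≠ pos v y :=
  fun hc => h (pos_inj hc)

/-- margin of `x` over `y` in `S`, as an integer. -/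
def mrg (S : Multiset (Vote m)) (x y : Fin m) : ℤ :=
  (snAbove S x y : ℤ) - (snAbove S y x : ℤ)

lemma sadv_eq_toNat (S : Multiset (Vote m)) (x y : Fin m) :
    sadv S x y = (mrg S x y).toNat := by
  unfold sadv mrg; omega

/-- requirement of `b` for making `y` a Condorcet-tie winner. -/
def req (S : Multiset (Vote m)) (y b : Fin m) : ℕ := (sadv S b y + 1) / 2

lemma req_eq (S : Multiset (Vote m)) (y b : Fin m) :
    req S y b = ((mrg S b y).toNat + 1) / 2 := by rw [req, sadv_eq_toNat]

lemma tie_iff_req (S : Multiset (Vote m)) (y : Fin m) :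
    sCondorcetTieWinner S y ↔ ∀ b, b ≠ y → req S y b = 0 := by
  unfold sCondorcetTieWinner req
  exact ⟨fun h b hb => by rw [h b hb], fun h b hb => by have := h b hb; omega⟩

lemma snAbove_cons (v : Vote m) (T : Multiset (Vote m)) (x y : Fin m) :
    snAbove (v ::ₘ T) x y = snAbove T x y + (if pos v x < pos v y then 1 else 0) := by
  unfold snAbove
  rw [Multiset.filter_cons]
  have hiff : ((v x < v y)) ↔ (pos v x < pos v y) := Fin.lt_def
  by_cases h : v x < v y
  · rw [if_pos h, if_pos (hiff.mp h), Multiset.card_add, Multiset.card_singleton]; omega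
  · rw [if_neg h, if_neg (fun hc => h (hiff.mpr hc)), Multiset.card_add]; simp

lemma mrg_cons (v : Vote m) (T : Multiset (Vote m)) {x y : Fin m} (hxy : x ≠ y) :
    mrg (v ::ₘ T) x y = mrg T x y + (if pos v x < pos v y then 1 else -1) := by
  have h1 := snAbove_cons v T x y
  have h2 := snAbove_cons v T y x
  have hne : pos v x ≠ pos v y := pos_ne hxy
  unfold mrg
  split_ifs with h
  · rw [h1, h2, if_pos h, if_neg (by omega)]; push_cast; ring
  · rw [h1, h2, if_neg h, if_pos (by omega)]; push_cast; ring

/-- `1` if `b` lies in the window of size `t` directly above `y` in vote `v`. -/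
def inW (y : Fin m) (v : Vote m) (t : ℕ) (b : Fin m) : ℕ :=
  if pos v b < pos v y ∧ pos v y ≤ pos v b + t then 1 else 0

/-- number of votes of the cover `c` whose window covers `b`. -/
def covcnt (c : Multiset (Vote m × ℕ)) (y b : Fin m) : ℕ :=
  (c.filter (fun p => pos p.1 b < pos p.1 y ∧ pos p.1 y ≤ pos p.1 b + p.2)).card

lemma covcnt_cons (v : Vote m) (t : ℕ) (d : Multiset (Vote m × ℕ)) (y b : Fin m) :
    covcnt ((v, t) ::ₘ d) y b = inW y v t b + covcnt d y b := by
  unfold covcnt inW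
  rw [Multiset.filter_cons]
  split_ifs with h
  · rw [Multiset.card_add, Multiset.card_singleton]
  · rw [Multiset.card_add]; simp

def IsCover (c : Multiset (Vote m × ℕ)) (S : Multiset (Vote m)) (y : Fin m) : Prop :=
  c.map Prod.fst = S ∧ (∀ p ∈ c, p.2 ≤ pos p.1 y) ∧
    (∀ b, b ≠ y → req S y b ≤ covcnt c y b)

def cost (c : Multiset (Vote m × ℕ)) : ℕ := (c.map Prod.snd).sum

noncomputable def OptD (S : Multiset (Vote m)) (y : Fin m) : ℕ :=
  sInf {C | ∃ c, IsCover c S y ∧ cost c = C}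

lemma cover_full (S : Multiset (Vote m)) (y : Fin m) :
    IsCover (S.map (fun v => (v, pos v y))) S y := by
  refine ⟨by rw [Multiset.map_map]; simp, ?_, ?_⟩
  · intro p hp
    rcases Multiset.mem_map.mp hp with ⟨v, _, rfl⟩
    exact le_rfl
  · intro b hb
    have : covcnt (S.map (fun v => (v, pos v y))) y b = snAbove S b y := by
      unfold covcnt snAbove
      rw [Multiset.filter_map]
      rw [Multiset.card_map]
      congr 1
      apply Multiset.filter_congr
      intro v _
      show (pos v b < pos v y ∧ pos v y ≤ pos v b + pos v y) ↔ (v b < v y)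
      have hiff : ((v b < v y)) ↔ (pos v b < pos v y) := Fin.lt_def
      constructor
      · intro h; exact hiff.mpr h.1
      · intro h; exact ⟨hiff.mp h, by omega⟩
    rw [this]
    have : sadv S b y ≤ snAbove S b y := Nat.sub_le _ _
    unfold req; omega

lemma optD_le {c : Multiset (Vote m × ℕ)} {S : Multiset (Vote m)} {y : Fin m}
    (h : IsCover c S y) : OptD S y ≤ cost c := Nat.sInf_le ⟨c, h, rfl⟩

lemma exists_opt_cover (S : Multiset (Vote m)) (y : Fin m) :
    ∃ c, IsCover c S y ∧ cost c = OptD S y := by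
  have hne : {C | ∃ c, IsCover c S y ∧ cost c = C}.Nonempty :=
    ⟨cost (S.map (fun v => (v, pos v y))), ⟨_, cover_full S y, rfl⟩⟩
  exact Nat.sInf_mem hne

lemma optD_tie {S : Multiset (Vote m)} {y : Fin m} (h : sCondorcetTieWinner S y) :
    OptD S y = 0 := by
  have h0 : IsCover (S.map (fun v => (v, 0))) S y := by
    refine ⟨by rw [Multiset.map_map]; simp, ?_, ?_⟩
    · intro p hp
      rcases Multiset.mem_map.mp hp with ⟨v, _, rfl⟩
      exact Nat.zero_le _
    · intro b hb
      rw [(tie_iff_req S y).mp h b hb]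
      exact Nat.zero_le _
  have := optD_le h0
  have : cost (S.map (fun v => (v, 0))) = 0 := by
    unfold cost
    rw [Multiset.map_map]
    simp [Function.comp]
  omega

end DodgsonAux
namespace DodgsonAux
variable {m : ℕ}

lemma cover_decomp {c : Multiset (Vote m × ℕ)} {v : Vote m} {T : Multiset (Vote m)}
    (h : c.map Prod.fst = v ::ₘ T) :
    ∃ t d, c = (v, t) ::ₘ d ∧ d.map Prod.fst = T := by
  have hv : v ∈ c.map Prod.fst := by rw [h]; exact Multiset.mem_cons_self _ _
  rcases Multiset.mem_map.mp hv with ⟨⟨p1, p2⟩, hp, hfst⟩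
  simp only at hfst
  subst hfst
  refine ⟨p2, c.erase (p1, p2), ?_, ?_⟩
  · exact (Multiset.cons_erase hp).symm
  · have hc : c = (p1, p2) ::ₘ c.erase (p1, p2) := (Multiset.cons_erase hp).symm
    have h2 : c.map Prod.fst = p1 ::ₘ (c.erase (p1, p2)).map Prod.fst := by
      conv_lhs => rw [hc]
      rw [Multiset.map_cons]
    rw [h] at h2
    exact (Multiset.cons_inj_right _).mp h2.symm

lemma cover_replace {y : Fin m} {u₁ u₂ : Vote m} {s₁ s₂ : ℕ}
    {d : Multiset (Vote m × ℕ)} {T : Multiset (Vote m)}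
    (h : IsCover ((u₁, s₁) ::ₘ d) (u₁ ::ₘ T) y)
    (ht : s₂ ≤ pos u₂ y)
    (hb : ∀ b, b ≠ y →
      req (u₂ ::ₘ T) y b + inW y u₁ s₁ b ≤
        max (req (u₁ ::ₘ T) y b) (inW y u₁ s₁ b) + inW y u₂ s₂ b) :
    IsCover ((u₂, s₂) ::ₘ d) (u₂ ::ₘ T) y := by
  obtain ⟨hmap, hwin, hcov⟩ := h
  have hdT : d.map Prod.fst = T := by
    rw [Multiset.map_cons] at hmap
    exact (Multiset.cons_inj_right _).mp hmap
  refine ⟨by rw [Multiset.map_cons, hdT], ?_, ?_⟩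
  · intro p hp
    rcases Multiset.mem_cons.mp hp with rfl | hp'
    · exact ht
    · exact hwin p (Multiset.mem_cons_of_mem hp')
  · intro b hby
    have h1 := hcov b hby
    rw [covcnt_cons] at h1
    rw [covcnt_cons]
    have h2 := hb b hby
    omega

lemma inW_succ_eq {y : Fin m} {v : Vote m} {t : ℕ} {x b : Fin m}
    (hx : pos v x + (t + 1) = pos v y) (hbx : b ≠ x) :
    inW y v t b = inW y v (t+1) b := by
  have hne : pos v b ≠ pos v x := pos_ne hbx
  unfold inW
  split_ifs <;> omega

lemma cover_cut {y : Fin m} {v : Vote m} {t : ℕ} {d : Multiset (Vote m × ℕ)}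
    {S : Multiset (Vote m)} (h : IsCover ((v, t+1) ::ₘ d) S y)
    {x : Fin m} (hx : pos v x + (t+1) = pos v y)
    (hslack : req S y x + 1 ≤ covcnt ((v, t+1) ::ₘ d) y x) :
    IsCover ((v, t) ::ₘ d) S y := by
  obtain ⟨hmap, hwin, hcov⟩ := h
  refine ⟨by rw [Multiset.map_cons] at hmap ⊢; exact hmap, ?_, ?_⟩
  · intro p hp
    rcases Multiset.mem_cons.mp hp with rfl | hp'
    · have := hwin (v, t+1) (Multiset.mem_cons_self _ _)
      simp only at this ⊢
      omega
    · exact hwin p (Multiset.mem_cons_of_mem hp')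
  · intro b hby
    by_cases hbx : b = x
    · subst hbx
      rw [covcnt_cons] at hslack ⊢
      have h0 : inW y v t b = 0 := by unfold inW; split_ifs <;> omega
      have h1 : inW y v (t+1) b ≤ 1 := by unfold inW; split_ifs <;> omega
      omega
    · have h1 := hcov b hby
      rw [covcnt_cons] at h1 ⊢
      rw [inW_succ_eq hx hbx]
      exact h1

lemma cost_cons (v : Vote m) (t : ℕ) (d : Multiset (Vote m × ℕ)) :
    cost ((v, t) ::ₘ d) = t + cost d := by
  unfold cost; rw [Multiset.map_cons, Multiset.sum_cons]

/-- constructive direction: a cover of cost `C` yields a sequence of `C` adjacent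
swaps making `y` a Condorcet-tie winner. -/
lemma reach_of_cover (y : Fin m) :
    ∀ (C : ℕ) (S : Multiset (Vote m)) (c : Multiset (Vote m × ℕ)),
      IsCover c S y → cost c = C →
      ∃ Q, Reach sAdjSwap C S Q ∧ sCondorcetTieWinner Q y := by
  intro C
  induction C with
  | zero =>
      intro S c hc hcost
      refine ⟨S, rfl, ?_⟩
      have hzero : ∀ p ∈ c, p.2 = 0 := by
        intro p hp
        have : (c.map Prod.snd).sum = 0 := hcost
        rw [Multiset.sum_eq_zero_iff] at this
        exact this p.2 (Multiset.mem_map_of_mem _ hp)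
      rw [tie_iff_req]
      intro b hby
      have hcc : covcnt c y b = 0 := by
        unfold covcnt
        rw [Multiset.card_eq_zero, Multiset.filter_eq_nil]
        intro p hp hcond
        have := hzero p hp
        omega
      have := hc.2.2 b hby
      omega
  | succ C ih =>
      intro S c hc hcost
      -- find a vote with a nonzero window
      have hex : ∃ p ∈ c, p.2 ≠ 0 := by
        by_contra hall
        push_neg at hall
        have : (c.map Prod.snd).sum = 0 := by
          rw [Multiset.sum_eq_zero_iff]
          intro x hx
          rcases Multiset.mem_map.mp hx with ⟨p, hp, rfl⟩
          exact hall p hp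
        have h0 : cost c = 0 := this
        omega
      rcases hex with ⟨⟨v, s⟩, hp, hs⟩
      obtain ⟨t, rfl⟩ : ∃ t, s = t + 1 := ⟨s - 1, by omega⟩
      have hc' : c = (v, t+1) ::ₘ c.erase (v, t+1) := (Multiset.cons_erase hp).symm
      set d := c.erase (v, t+1) with hd
      have hSdecomp : S = v ::ₘ d.map Prod.fst := by
        rw [← hc.1, hc', Multiset.map_cons]
      set T := d.map Prod.fst with hT
      set π := pos v y with hπdef
      have hπ : t + 1 ≤ π := by
        have := hc.2.1 (v, t+1) hp
        simpa using this
      have hπm : π < m := pos_lt v y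
      have hπ1 : π - 1 < m := by omega
      set p' : Fin m := ⟨π - 1, hπ1⟩ with hp'
      set q' : Fin m := ⟨π, hπm⟩ with hq'
      have hq'vy : q' = v y := by
        apply Fin.ext; simp only [hq']; rw [hπdef]; rfl
      set w := v.trans (Equiv.swap p' q') with hw
      set x := v.symm p' with hxdef
      have hvx : v x = p' := v.apply_symm_apply p'
      have hposx : pos v x = π - 1 := by rw [pos, hvx]
      have hp'q' : p' ≠ q' := by
        intro hc0
        have := congrArg Fin.val hc0
        simp [hp', hq'] at this
        omega
      have hwyv : w y = p' := by
        rw [hw]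
        simp only [Equiv.trans_apply, ← hq'vy, Equiv.swap_apply_right]
      have hwy : pos w y = π - 1 := by rw [pos, hwyv]
      have hwxv : w x = q' := by
        rw [hw]
        simp only [Equiv.trans_apply, hvx, Equiv.swap_apply_left]
      have hwx : pos w x = π := by rw [pos, hwxv]
      have hxy : x ≠ y := by
        intro hc0
        rw [hc0] at hposx
        omega
      have hwb : ∀ b, b ≠ x → b ≠ y → pos w b = pos v b := by
        intro b hbx hby
        have h1 : v b ≠ p' := fun hc0 => hbx (v.injective (by rw [hc0, hvx]))
        have h2 : v b ≠ q' := fun hc0 => hby (v.injective (by rw [hc0, ← hq'vy]))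
        rw [pos, hw]
        simp only [Equiv.trans_apply]
        rw [Equiv.swap_apply_of_ne_of_ne h1 h2]
        rfl
      -- the swap step
      have hstep : sAdjSwap S (w ::ₘ T) := by
        refine ⟨v, by rw [hSdecomp]; exact Multiset.mem_cons_self _ _, w,
          ⟨p', q', ?_, rfl⟩, ?_⟩
        · simp [hp', hq']; omega
        · rw [hSdecomp, Multiset.erase_cons_head]
      -- new cover
      have hcov' : IsCover ((v, t+1) ::ₘ d) (v ::ₘ T) y := by
        rw [← hc', ← hSdecomp]; exact hc
      have hnew : IsCover ((w, t) ::ₘ d) (w ::ₘ T) y := by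
        apply cover_replace hcov'
        · rw [hwy]; omega
        · intro b hby
          by_cases hbx : b = x
          · subst hbx
            have hr1 : req (v ::ₘ T) y x = ((mrg T x y + 1).toNat + 1) / 2 := by
              rw [req_eq, mrg_cons v T hby, if_pos (by omega)]
            have hr2 : req (w ::ₘ T) y x = ((mrg T x y - 1).toNat + 1) / 2 := by
              rw [req_eq, mrg_cons w T hby, if_neg (by omega)]
              have : mrg T x y + -1 = mrg T x y - 1 := by ring
              rw [this]
            have hw1 : inW y v (t+1) x = 1 := by
              unfold inW; rw [if_pos (by constructor <;> omega)]
            have hw2 : inW y w t x = 0 := by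
              unfold inW; rw [if_neg (by omega)]
            rw [hr1, hr2, hw1, hw2]
            omega
          · have hpb : pos w b = pos v b := hwb b hbx hby
            have hpbx : pos v b ≠ π - 1 := by
              rw [← hposx]; exact pos_ne hbx
            have hreq : req (w ::ₘ T) y b = req (v ::ₘ T) y b := by
              rw [req_eq, req_eq, mrg_cons v T hby, mrg_cons w T hby, hpb, hwy]
              congr 2
              by_cases hlt : pos v b < π
              · rw [if_pos hlt, if_pos (by omega)]
              · rw [if_neg hlt, if_neg (by omega)]
            have hwin : inW y w t b = inW y v (t+1) b := by
              unfold inW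
              rw [hpb, hwy]
              by_cases hcond : pos v b < π ∧ π ≤ pos v b + (t+1)
              · rw [if_pos hcond, if_pos (by omega)]
              · rw [if_neg hcond, if_neg (by omega)]
            rw [hreq, hwin]
            omega
      have hcost' : cost ((w, t) ::ₘ d) = C := by
        have : cost c = (t+1) + cost d := by rw [hc', cost_cons]
        rw [cost_cons]
        omega
      rcases ih (w ::ₘ T) _ hnew hcost' with ⟨Q, hQ, htie⟩
      exact ⟨Q, ⟨w ::ₘ T, hstep, hQ⟩, htie⟩

end DodgsonAux
namespace DodgsonAux
variable {m : ℕ}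

/-- one adjacent swap changes `OptD` by at most one (the direction we need). -/
lemma optD_le_swap {S S₂ : Multiset (Vote m)} {y : Fin m} (h : sAdjSwap S S₂) :
    OptD S y ≤ OptD S₂ y + 1 := by
  rcases h with ⟨v, hv, w, ⟨p', q', hq, hwdef⟩, hS₂⟩
  set T := S.erase v with hT
  have hS : S = v ::ₘ T := (Multiset.cons_erase hv).symm
  obtain ⟨c₂, hc₂, hcost₂⟩ := exists_opt_cover S₂ y
  have hmap : c₂.map Prod.fst = w ::ₘ T := by rw [hc₂.1, hS₂]
  obtain ⟨t₂, d, rfl, hdT⟩ := cover_decomp hmap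
  have hc₂' : IsCover ((w, t₂) ::ₘ d) (w ::ₘ T) y := by rw [← hS₂]; exact hc₂
  -- position facts
  have hvals : ∀ b : Fin m,
      (pos v b = (p' : ℕ) ∧ pos w b = (q' : ℕ)) ∨
      (pos v b = (q' : ℕ) ∧ pos w b = (p' : ℕ)) ∨
      (pos v b = pos w b ∧ pos v b ≠ (p' : ℕ) ∧ pos v b ≠ (q' : ℕ)) := by
    intro b
    by_cases h1 : v b = p'
    · left
      constructor
      · rw [pos, h1]
      · rw [pos, hwdef]
        simp only [Equiv.trans_apply, h1, Equiv.swap_apply_left]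
    · by_cases h2 : v b = q'
      · right; left
        constructor
        · rw [pos, h2]
        · rw [pos, hwdef]
          simp only [Equiv.trans_apply, h2, Equiv.swap_apply_right]
      · right; right
        refine ⟨?_, fun hc0 => h1 (Fin.ext hc0), fun hc0 => h2 (Fin.ext hc0)⟩
        rw [pos, pos, hwdef]
        simp only [Equiv.trans_apply]
        rw [Equiv.swap_apply_of_ne_of_ne h1 h2]
  set t' := min (t₂ + 1) (pos v y) with ht'
  have hnew : IsCover ((v, t') ::ₘ d) (v ::ₘ T) y := by
    apply cover_replace hc₂'
    · exact min_le_right _ _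
    · intro b hby
      have hb1 := hvals b
      have hb2 := hvals y
      have hne1 : pos v b ≠ pos v y := pos_ne hby
      have hne2 : pos w b ≠ pos w y := pos_ne hby
      rw [req_eq, req_eq, mrg_cons v T hby, mrg_cons w T hby]
      unfold inW
      split_ifs <;> omega
  calc OptD S y ≤ cost ((v, t') ::ₘ d) := by rw [hS]; exact optD_le hnew
    _ ≤ cost ((w, t₂) ::ₘ d) + 1 := by rw [cost_cons, cost_cons]; omega
    _ = OptD S₂ y + 1 := by rw [hcost₂]

lemma optD_le_reach {y : Fin m} :
    ∀ (k : ℕ) (S Q : Multiset (Vote m)), Reach sAdjSwap k S Q →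
      sCondorcetTieWinner Q y → OptD S y ≤ k := by
  intro k
  induction k with
  | zero => intro S Q hR htie; cases hR; exact le_of_eq (optD_tie htie)
  | succ k ih =>
      intro S Q hR htie
      rcases hR with ⟨R, hSR, hRQ⟩
      have := optD_le_swap (y := y) hSR
      have := ih R Q hRQ htie
      omega

lemma sScD_eq_optD (S : Multiset (Vote m)) (y : Fin m) : sScD S y = OptD S y := by
  obtain ⟨c, hc, hcost⟩ := exists_opt_cover S y
  obtain ⟨Q, hQ, htie⟩ := reach_of_cover y (OptD S y) S c hc hcost
  have hle : sScD S y ≤ OptD S y := Nat.sInf_le ⟨Q, hQ, htie⟩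
  have hne : {k | ∃ Q, Reach sAdjSwap k S Q ∧ sCondorcetTieWinner Q y}.Nonempty :=
    ⟨OptD S y, Q, hQ, htie⟩
  obtain ⟨Q', hQ', htie'⟩ := Nat.sInf_mem hne
  have hge : OptD S y ≤ sScD S y := optD_le_reach _ S Q' hQ' htie'
  omega

end DodgsonAux
namespace DodgsonAux
variable {m : ℕ}

section Mono
variable {v₁ v₀ : Vote m} {z : Fin m}

/-- in `v₁`, `z` is on top; in `v₀`, `z` is at the bottom. -/
lemma mrg_cons_v1 (h1 : pos v₁ z = 0) (T : Multiset (Vote m)) {b : Fin m} (hbz : b ≠ z) :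
    mrg (v₁ ::ₘ T) b z = mrg T b z + (-1) := by
  rw [mrg_cons _ _ hbz, if_neg (by omega)]

lemma mrg_cons_v0 (h0 : pos v₀ z = m - 1) (T : Multiset (Vote m)) {b : Fin m} (hbz : b ≠ z) :
    mrg (v₀ ::ₘ T) b z = mrg T b z + 1 := by
  have h2 : pos v₀ b < m := pos_lt _ _
  have h3 : pos v₀ b ≠ pos v₀ z := pos_ne hbz
  rw [mrg_cons _ _ hbz, if_pos (by omega)]

lemma inW_v0_zero (h0 : pos v₀ z = m - 1) (b : Fin m) : inW z v₀ 0 b = 0 := by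
  unfold inW
  rw [if_neg]
  intro hc
  omega

lemma inW_v1_zero (h1 : pos v₁ z = 0) (t : ℕ) (b : Fin m) : inW z v₁ t b = 0 := by
  unfold inW
  rw [if_neg]
  intro hc
  omega

/-- weak monotonicity for the `z`-score. -/
lemma optD_mono_z (h1 : pos v₁ z = 0) (h0 : pos v₀ z = m - 1)
    (T : Multiset (Vote m)) :
    OptD (v₁ ::ₘ T) z ≤ OptD (v₀ ::ₘ T) z := by
  obtain ⟨c₀, hc₀, hcost₀⟩ := exists_opt_cover (v₀ ::ₘ T) z
  obtain ⟨t₀, d, rfl, hdT⟩ := cover_decomp hc₀.1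
  have hnew : IsCover ((v₁, 0) ::ₘ d) (v₁ ::ₘ T) z := by
    apply cover_replace hc₀
    · omega
    · intro b hbz
      rw [req_eq, req_eq, mrg_cons_v1 h1 T hbz, mrg_cons_v0 h0 T hbz,
        inW_v1_zero h1]
      have : inW z v₀ t₀ b ≤ 1 := by unfold inW; split_ifs <;> omega
      omega
  have := optD_le hnew
  rw [cost_cons] at this
  rw [cost_cons] at hcost₀
  omega

/-- strict monotonicity for the `z`-score, assuming `mrg (v₁ ::ₘ T) a z ≥ -1`. -/
lemma optD_strict_z {a : Fin m} (haz : a ≠ z) (h1 : pos v₁ z = 0) (h0 : pos v₀ z = m - 1)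
    (T : Multiset (Vote m)) (hmrg : -1 ≤ mrg (v₁ ::ₘ T) a z) :
    OptD (v₁ ::ₘ T) z + 1 ≤ OptD (v₀ ::ₘ T) z := by
  obtain ⟨c₀, hc₀, hcost₀⟩ := exists_opt_cover (v₀ ::ₘ T) z
  obtain ⟨t₀, d, rfl, hdT⟩ := cover_decomp hc₀.1
  -- first: replace (v₀, t₀) by (v₁, 0); the result is a cover of v₁ ::ₘ T
  have hnew : IsCover ((v₁, 0) ::ₘ d) (v₁ ::ₘ T) z := by
    apply cover_replace hc₀
    · omega
    · intro b hbz
      rw [req_eq, req_eq, mrg_cons_v1 h1 T hbz, mrg_cons_v0 h0 T hbz,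
        inW_v1_zero h1]
      have : inW z v₀ t₀ b ≤ 1 := by unfold inW; split_ifs <;> omega
      omega
  rcases Nat.eq_zero_or_pos t₀ with rfl | ht₀pos
  · -- hard case: t₀ = 0, cut the top of a window covering a
    have hMa : 0 ≤ mrg T a z := by
      rw [mrg_cons_v1 h1 T haz] at hmrg
      omega
    have hreqa : 1 ≤ req (v₀ ::ₘ T) z a := by
      rw [req_eq, mrg_cons_v0 h0 T haz]
      omega
    have hcova := hc₀.2.2 a haz
    rw [covcnt_cons, inW_v0_zero h0] at hcova
    -- find a window in d covering a
    have hex : ∃ p ∈ d, pos p.1 a < pos p.1 z ∧ pos p.1 z ≤ pos p.1 a + p.2 := by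
      have hpos : 0 < covcnt d z a := by omega
      unfold covcnt at hpos
      rw [Multiset.card_pos_iff_exists_mem] at hpos
      obtain ⟨p, hp⟩ := hpos
      rw [Multiset.mem_filter] at hp
      exact ⟨p, hp.1, hp.2⟩
    obtain ⟨⟨u, s⟩, hud, hua1, hua2⟩ := hex
    simp only at hua1 hua2
    obtain ⟨s0, rfl⟩ : ∃ s0, s = s0 + 1 := ⟨s - 1, by omega⟩
    set e := d.erase (u, s0 + 1) with he
    have hde : d = (u, s0 + 1) ::ₘ e := (Multiset.cons_erase hud).symm
    -- rearrange the cover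
    have hc₁ : IsCover ((u, s0 + 1) ::ₘ ((v₁, 0) ::ₘ e)) (v₁ ::ₘ T) z := by
      have : (v₁, 0) ::ₘ d = (u, s0 + 1) ::ₘ ((v₁, 0) ::ₘ e) := by
        rw [hde, Multiset.cons_swap]
      rw [← this]
      exact hnew
    have hsu : s0 + 1 ≤ pos u z := hc₀.2.1 (u, s0+1) (by
      rw [hde]; exact Multiset.mem_cons_of_mem (Multiset.mem_cons_self _ _))
    -- the element at the top of this window
    have hxlt : pos u z - (s0 + 1) < m := by have := pos_lt u z; omega
    set x := u.symm ⟨pos u z - (s0 + 1), hxlt⟩ with hxdef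
    have hux : pos u x = pos u z - (s0 + 1) := by
      rw [pos, hxdef, u.apply_symm_apply]
    have hxz : x ≠ z := by
      intro hc0
      rw [hc0] at hux
      omega
    -- slack at x
    have hcovx := hc₀.2.2 x hxz
    rw [covcnt_cons, inW_v0_zero h0] at hcovx
    have hxin : 0 < covcnt d z x := by
      unfold covcnt
      rw [Multiset.card_pos_iff_exists_mem]
      refine ⟨(u, s0+1), Multiset.mem_filter.mpr ⟨hud, ?_⟩⟩
      simp only
      omega
    have hcut : IsCover ((u, s0) ::ₘ ((v₁, 0) ::ₘ e)) (v₁ ::ₘ T) z := by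
      apply cover_cut hc₁ (x := x) (by omega)
      -- slack : req (v₁ ::ₘ T) z x + 1 ≤ covcnt ((u,s0+1) ::ₘ (v₁,0) ::ₘ e) z x
      have hcceq : covcnt ((u, s0+1) ::ₘ ((v₁, 0) ::ₘ e)) z x = covcnt d z x := by
        rw [covcnt_cons, covcnt_cons, inW_v1_zero h1]
        rw [hde, covcnt_cons]
        omega
      rw [hcceq, req_eq, mrg_cons_v1 h1 T hxz]
      rw [req_eq, mrg_cons_v0 h0 T hxz] at hcovx
      omega
    have hle := optD_le hcut
    rw [cost_cons, cost_cons] at hle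
    rw [cost_cons] at hcost₀
    have hcostd : cost d = s0 + 1 + cost e := by rw [hde, cost_cons]
    omega
  · -- easy case: t₀ ≥ 1, dropping the window saves at least one
    have hle := optD_le hnew
    rw [cost_cons] at hle
    rw [cost_cons] at hcost₀
    omega

end Mono
end DodgsonAux
namespace DodgsonAux
variable {m : ℕ}

section Relabel
variable (σ : Equiv.Perm (Fin m))

/-- relabeling of a vote by a permutation `σ` of the alternatives. -/
def rel (σ : Equiv.Perm (Fin m)) (v : Vote m) : Vote m := σ.trans v

lemma rel_inj : Function.Injective (rel σ) := by
  intro v v' h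
  have h2 := congrArg (fun u => σ.symm.trans u) h
  simpa only [rel, ← Equiv.trans_assoc, Equiv.symm_trans_self, Equiv.refl_trans] using h2

lemma snAbove_map (S : Multiset (Vote m)) (x y : Fin m) :
    snAbove (S.map (rel σ)) x y = snAbove S (σ x) (σ y) := by
  unfold snAbove
  rw [Multiset.filter_map, Multiset.card_map]
  rfl

lemma sadv_map (S : Multiset (Vote m)) (x y : Fin m) :
    sadv (S.map (rel σ)) x y = sadv S (σ x) (σ y) := by
  unfold sadv
  rw [snAbove_map, snAbove_map]

lemma mrg_map (S : Multiset (Vote m)) (x y : Fin m) :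
    mrg (S.map (rel σ)) x y = mrg S (σ x) (σ y) := by
  unfold mrg
  rw [snAbove_map, snAbove_map]

lemma tie_map {S : Multiset (Vote m)} {y : Fin m} (h : sCondorcetTieWinner S (σ y)) :
    sCondorcetTieWinner (S.map (rel σ)) y := by
  intro b hb
  rw [sadv_map]
  exact h (σ b) (fun hc => hb (σ.injective hc))

lemma adjswap_map {S T : Multiset (Vote m)} (h : sAdjSwap S T) :
    sAdjSwap (S.map (rel σ)) (T.map (rel σ)) := by
  rcases h with ⟨v, hv, w, ⟨p, q, hpq, rfl⟩, rfl⟩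
  refine ⟨rel σ v, Multiset.mem_map_of_mem _ hv, rel σ (v.trans (Equiv.swap p q)),
    ⟨p, q, hpq, ?_⟩, ?_⟩
  · unfold rel
    rw [Equiv.trans_assoc]
  · rw [Multiset.map_cons, Multiset.map_erase _ (rel_inj σ)]

lemma reach_map : ∀ (k : ℕ) (S Q : Multiset (Vote m)), Reach sAdjSwap k S Q →
    Reach sAdjSwap k (S.map (rel σ)) (Q.map (rel σ)) := by
  intro k
  induction k with
  | zero => intro S Q h; cases h; rfl
  | succ k ih =>
      intro S Q h
      rcases h with ⟨R, hSR, hRQ⟩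
      exact ⟨R.map (rel σ), adjswap_map σ hSR, ih R Q hRQ⟩

lemma sScD_map_le (S : Multiset (Vote m)) (y : Fin m) :
    sScD (S.map (rel σ)) y ≤ sScD S (σ y) := by
  have hne : {k | ∃ Q, Reach sAdjSwap k S Q ∧ sCondorcetTieWinner Q (σ y)}.Nonempty := by
    obtain ⟨c, hc, hcost⟩ := exists_opt_cover S (σ y)
    obtain ⟨Q, hQ, htie⟩ := reach_of_cover (σ y) _ S c hc hcost
    exact ⟨_, Q, hQ, htie⟩
  obtain ⟨Q, hQ, htie⟩ := Nat.sInf_mem hne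
  exact Nat.sInf_le ⟨Q.map (rel σ), reach_map σ _ S Q hQ, tie_map σ htie⟩

end Relabel

section Swap
variable {a z : Fin m}

lemma rel_swap_invol (σ : Equiv.Perm (Fin m)) (hσ : σ.trans σ = Equiv.refl _)
    (S : Multiset (Vote m)) : (S.map (rel σ)).map (rel σ) = S := by
  rw [Multiset.map_map]
  have : (rel σ) ∘ (rel σ) = id := by
    funext v
    simp only [Function.comp_apply, rel, ← Equiv.trans_assoc, hσ, Equiv.refl_trans, id]
  rw [this, Multiset.map_id]

lemma sScD_map_eq (σ : Equiv.Perm (Fin m)) (hσ : σ.trans σ = Equiv.refl _)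
    (S : Multiset (Vote m)) (y : Fin m) :
    sScD (S.map (rel σ)) y = sScD S (σ y) := by
  have h1 := sScD_map_le σ S y
  have h2 := sScD_map_le σ (S.map (rel σ)) (σ y)
  rw [rel_swap_invol σ hσ] at h2
  have hσy : σ (σ y) = y := by
    have := congrArg (fun e => Equiv.toFun e y) hσ
    simpa using this
  rw [hσy] at h2
  omega

end Swap

section MainMono
variable {a z : Fin m} (haz : a ≠ z) (hm : 2 ≤ m)

/-- construction of the two distinguished votes. -/
lemma exists_v1 (hm : 2 ≤ m) (haz : a ≠ z) :
    ∃ v₁ : Vote m, pos v₁ z = 0 ∧ pos v₁ a = m - 1 := by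
  have h0 : 0 < m := by omega
  have h1 : m - 1 < m := by omega
  set zero : Fin m := ⟨0, h0⟩
  set last : Fin m := ⟨m - 1, h1⟩
  have hzl : zero ≠ last := by
    intro hc
    have := congrArg Fin.val hc
    simp [zero, last] at this
    omega
  set e₁ := Equiv.swap zero z with he₁
  set a₁ := e₁ a with ha₁
  have ha₁0 : a₁ ≠ zero := by
    intro hc
    have : e₁ z = zero := Equiv.swap_apply_right _ _
    have := e₁.injective (hc.trans this.symm)
    exact haz this
  set e₂ := Equiv.swap a₁ last with he₂
  refine ⟨e₁.trans e₂, ?_, ?_⟩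
  · have hz : e₁ z = zero := Equiv.swap_apply_right _ _
    have h2 : e₂ zero = zero := by
      apply Equiv.swap_apply_of_ne_of_ne (Ne.symm ha₁0) hzl
    rw [pos, Equiv.trans_apply, hz, h2]
  · have h2 : e₂ a₁ = last := Equiv.swap_apply_left _ _
    rw [pos, Equiv.trans_apply, ← ha₁, h2]

end MainMono
end DodgsonAux
namespace DodgsonAux
variable {m : ℕ}

lemma mrg_neg (S : Multiset (Vote m)) (x y : Fin m) : mrg S y x = - mrg S x y := by
  unfold mrg; ring

lemma swap_trans_self (a z : Fin m) :
    (Equiv.swap a z).trans (Equiv.swap a z) = Equiv.refl (Fin m) := by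
  apply Equiv.ext
  intro x
  simp [Equiv.swap_apply_self]

lemma Dstep {a z : Fin m} (haz : a ≠ z) {v₁ v₀ : Vote m}
    (h1z : pos v₁ z = 0) (h1a : pos v₁ a = m - 1)
    (hv0 : v₀ = rel (Equiv.swap a z) v₁) (T : Multiset (Vote m)) :
    (sScD (v₁ ::ₘ T) z : ℤ) - (sScD (v₁ ::ₘ T) a : ℤ) + 1 ≤
      (sScD (v₀ ::ₘ T) z : ℤ) - (sScD (v₀ ::ₘ T) a : ℤ) := by
  set σ := Equiv.swap a z with hσdef
  have hσ : σ.trans σ = Equiv.refl (Fin m) := swap_trans_self a z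
  have hσa : σ a = z := Equiv.swap_apply_left _ _
  have hσz : σ z = a := Equiv.swap_apply_right _ _
  have hrelv0 : rel σ v₀ = v₁ := by
    rw [hv0]
    show rel σ (rel σ v₁) = v₁
    unfold rel
    rw [← Equiv.trans_assoc, hσ, Equiv.refl_trans]
  have h0a : pos v₀ a = 0 := by
    rw [hv0]; show pos (rel σ v₁) a = 0
    unfold rel pos
    rw [Equiv.trans_apply, hσa]
    exact h1z
  have h0z : pos v₀ z = m - 1 := by
    rw [hv0]; show pos (rel σ v₁) z = m - 1
    unfold rel pos
    rw [Equiv.trans_apply, hσz]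
    exact h1a
  set U := T.map (rel σ) with hU
  have hmap0 : (v₀ ::ₘ T).map (rel σ) = v₁ ::ₘ U := by
    rw [Multiset.map_cons, hrelv0]
  have hmap1 : (v₁ ::ₘ T).map (rel σ) = v₀ ::ₘ U := by
    rw [Multiset.map_cons, hv0]
  -- transfer of the `a`-scores
  have ha0 : sScD (v₀ ::ₘ T) a = sScD (v₁ ::ₘ U) z := by
    have := sScD_map_eq σ hσ (v₀ ::ₘ T) z
    rw [hmap0, hσz] at this
    exact this.symm
  have ha1 : sScD (v₁ ::ₘ T) a = sScD (v₀ ::ₘ U) z := by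
    have := sScD_map_eq σ hσ (v₁ ::ₘ T) z
    rw [hmap1, hσz] at this
    exact this.symm
  have hmrgT0 : mrg (v₀ ::ₘ T) a z = mrg T a z + 1 := mrg_cons_v0 h0z T haz
  have hmrgT1 : mrg (v₁ ::ₘ T) a z = mrg T a z + (-1) := mrg_cons_v1 h1z T haz
  by_cases hδ : (-1 : ℤ) ≤ mrg (v₁ ::ₘ T) a z
  · -- `z`-side strict, `a`-side weak
    have hzs := optD_strict_z haz h1z h0z T hδ
    have has := optD_mono_z (v₁ := v₁) (v₀ := v₀) h1z h0z U
    rw [ha0, ha1]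
    simp only [sScD_eq_optD]
    push_cast
    omega
  · -- `a`-side strict, `z`-side weak
    have hδ' : (-1 : ℤ) ≤ mrg (v₁ ::ₘ U) a z := by
      have h2 : mrg (v₁ ::ₘ U) a z = mrg (v₀ ::ₘ T) z a := by
        rw [← hmap0, mrg_map, hσa, hσz]
      rw [h2, mrg_neg, hmrgT0]
      omega
    have has := optD_strict_z haz h1z h0z U hδ'
    have hzs := optD_mono_z (v₁ := v₁) (v₀ := v₀) h1z h0z T
    rw [ha0, ha1]
    simp only [sScD_eq_optD]
    push_cast
    omega

end DodgsonAux
namespace DodgsonAux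
variable {m : ℕ}

lemma Dchain {a z : Fin m} (haz : a ≠ z) {v₁ v₀ : Vote m}
    (h1z : pos v₁ z = 0) (h1a : pos v₁ a = m - 1)
    (hv0 : v₀ = rel (Equiv.swap a z) v₁) (B : Multiset (Vote m)) (K : ℕ) :
    ∀ (j c : ℕ), c + j ≤ K →
      (sScD (B + (Multiset.replicate c v₀ + Multiset.replicate (K - c) v₁)) z : ℤ)
        - sScD (B + (Multiset.replicate c v₀ + Multiset.replicate (K - c) v₁)) a + j ≤
      (sScD (B + (Multiset.replicate (c+j) v₀ + Multiset.replicate (K - (c+j)) v₁)) z : ℤ)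
        - sScD (B + (Multiset.replicate (c+j) v₀ + Multiset.replicate (K - (c+j)) v₁)) a := by
  intro j
  induction j with
  | zero => intro c hc; simp
  | succ j ih =>
      intro c hc
      have hcj : c + j ≤ K := by omega
      have hlt : c + j < K := by omega
      have h1 := ih c hcj
      set c' := c + j with hc'
      set T := B + (Multiset.replicate c' v₀ + Multiset.replicate (K - c' - 1) v₁) with hT
      have e1 : B + (Multiset.replicate c' v₀ + Multiset.replicate (K - c') v₁) = v₁ ::ₘ T := by
        rw [show K - c' = (K - c' - 1) + 1 by omega, Multiset.replicate_succ, hT]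
        rw [Multiset.add_cons, Multiset.add_cons]
      have e2 : B + (Multiset.replicate (c'+1) v₀ + Multiset.replicate (K - (c'+1)) v₁)
          = v₀ ::ₘ T := by
        rw [Multiset.replicate_succ, show K - (c'+1) = K - c' - 1 by omega, hT]
        rw [Multiset.cons_add, Multiset.add_cons]
      have hstep := Dstep haz h1z h1a hv0 T
      rw [← e1, ← e2] at hstep
      have : c + (j + 1) = c' + 1 := by omega
      rw [this]
      push_cast at h1 hstep ⊢
      omega

lemma decomp_two {v₀ v₁ : Vote m} (hne : v₀ ≠ v₁) (W : Multiset (Vote m)) :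
    W = W.filter (fun u => ¬(u = v₀ ∨ u = v₁)) +
      (Multiset.replicate (W.count v₀) v₀ + Multiset.replicate (W.count v₁) v₁) := by
  rw [Multiset.ext]
  intro u
  rw [Multiset.count_add, Multiset.count_add, Multiset.count_filter,
    Multiset.count_replicate, Multiset.count_replicate]
  by_cases h0 : u = v₀
  · subst h0
    rw [if_neg (by tauto), if_pos rfl, if_neg (by tauto)]
    omega
  · by_cases h1 : u = v₁
    · subst h1
      rw [if_neg (by tauto), if_neg (by tauto), if_pos rfl]
      omega
    · rw [if_pos (by tauto), if_neg (by tauto), if_neg (by tauto)]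
      omega

lemma chain_unique {a z : Fin m} (haz : a ≠ z) {v₁ v₀ : Vote m}
    (h1z : pos v₁ z = 0) (h1a : pos v₁ a = m - 1)
    (hv0 : v₀ = rel (Equiv.swap a z) v₁) (hne : v₀ ≠ v₁)
    {W W' : Multiset (Vote m)}
    (hcnt : ∀ u, u ≠ v₀ → u ≠ v₁ → W.count u = W'.count u)
    (hsum : W.count v₀ + W.count v₁ = W'.count v₀ + W'.count v₁)
    (hD : (sScD W z : ℤ) - sScD W a = (sScD W' z : ℤ) - sScD W' a) : W = W' := by
  set c₀ := W.count v₀ with hc₀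
  set c₀' := W'.count v₀ with hc₀'
  set K := W.count v₀ + W.count v₁ with hK
  have hB : W.filter (fun u => ¬(u = v₀ ∨ u = v₁)) =
      W'.filter (fun u => ¬(u = v₀ ∨ u = v₁)) := by
    rw [Multiset.ext]
    intro u
    rw [Multiset.count_filter, Multiset.count_filter]
    by_cases h : ¬(u = v₀ ∨ u = v₁)
    · rw [if_pos h, if_pos h]
      push_neg at h
      exact hcnt u h.1 h.2
    · rw [if_neg h, if_neg h]
  have hW : W = W.filter (fun u => ¬(u = v₀ ∨ u = v₁)) +
      (Multiset.replicate c₀ v₀ + Multiset.replicate (K - c₀) v₁) := by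
    have := decomp_two hne W
    rw [show K - c₀ = W.count v₁ by omega]
    exact this
  have hW' : W' = W.filter (fun u => ¬(u = v₀ ∨ u = v₁)) +
      (Multiset.replicate c₀' v₀ + Multiset.replicate (K - c₀') v₁) := by
    have := decomp_two hne W'
    rw [hB, show K - c₀' = W'.count v₁ by omega]
    exact this
  rcases lt_trichotomy c₀ c₀' with hlt | heq | hgt
  · exfalso
    have hch := Dchain haz h1z h1a hv0 (W.filter (fun u => ¬(u = v₀ ∨ u = v₁))) K
      (c₀' - c₀) c₀ (by omega)
    rw [show c₀ + (c₀' - c₀) = c₀' by omega] at hch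
    rw [← hW, ← hW'] at hch
    omega
  · rw [hW, hW', heq]
  · exfalso
    have hch := Dchain haz h1z h1a hv0 (W.filter (fun u => ¬(u = v₀ ∨ u = v₁))) K
      (c₀ - c₀') c₀' (by omega)
    rw [show c₀' + (c₀ - c₀') = c₀ by omega] at hch
    rw [← hW, ← hW'] at hch
    omega

end DodgsonAux
namespace DodgsonAux
variable {m : ℕ}

lemma count_map_f0 {v₀ v₁ : Vote m} (hne : v₀ ≠ v₁) (W : Multiset (Vote m)) :
    (∀ u, u ≠ v₀ → u ≠ v₁ →
      (W.map (fun x => if x = v₀ then v₁ else x)).count u = W.count u)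
    ∧ (W.map (fun x => if x = v₀ then v₁ else x)).count v₀ = 0
    ∧ (W.map (fun x => if x = v₀ then v₁ else x)).count v₁ = W.count v₀ + W.count v₁ := by
  induction W using Multiset.induction with
  | empty => simp
  | cons x W ih =>
      obtain ⟨ih1, ih2, ih3⟩ := ih
      rw [Multiset.map_cons]
      by_cases hx0 : x = v₀
      · refine ⟨?_, ?_, ?_⟩
        · intro u hu0 hu1
          simp only [hx0, if_true, Multiset.count_cons, if_neg hu1,
            if_neg hu0, ih1 u hu0 hu1]
          try simp [hu0, hu1]
        · simp only [hx0, if_true, Multiset.count_cons, if_neg hne, ih2]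
          try simp [hne]
        · simp only [hx0, if_true, Multiset.count_cons, ih3]
          simp [Ne.symm hne]
          omega
      · rw [if_neg hx0]
        refine ⟨?_, ?_, ?_⟩
        · intro u hu0 hu1
          rw [Multiset.count_cons, Multiset.count_cons, ih1 u hu0 hu1]
        · rw [Multiset.count_cons, if_neg (fun hc => hx0 hc.symm), ih2]
        · simp only [Multiset.count_cons, ih3,
            if_neg (fun hc : v₀ = x => hx0 hc.symm)]
          by_cases hv1x : v₁ = x
          · simp only [if_pos hv1x]
            omega
          · simp only [if_neg hv1x]
            omega

variable (n : ℕ) (v₀ : Vote m)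

/-- voting situations avoiding `v₀` are in bijection with `Sym` over the other votes. -/
def noV0Equiv : {W : Sym (Vote m) n // Multiset.count v₀ (W : Multiset (Vote m)) = 0} ≃
    Sym {u : Vote m // u ≠ v₀} n where
  toFun := fun ⟨W, h⟩ =>
    ⟨(W : Multiset (Vote m)).pmap (fun u hu => (⟨u, hu⟩ : {u : Vote m // u ≠ v₀}))
      (fun u hu heq => by
        rw [Multiset.count_eq_zero] at h
        exact h (heq ▸ hu)),
      by rw [Multiset.card_pmap]; exact W.2⟩
  invFun := fun V =>
    ⟨⟨(V : Multiset {u : Vote m // u ≠ v₀}).map Subtype.val,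
        by rw [Multiset.card_map]; exact V.2⟩,
      by
        rw [Multiset.count_eq_zero]
        intro hmem
        rcases Multiset.mem_map.mp hmem with ⟨⟨u, hu⟩, _, hval⟩
        exact hu hval⟩
  left_inv := by
    rintro ⟨W, h⟩
    apply Subtype.ext
    apply Subtype.ext
    show Multiset.map Subtype.val (Multiset.pmap _ _ _) = (W : Multiset (Vote m))
    rw [Multiset.map_pmap]
    exact Multiset.pmap_eq_map _ _ _ _ |>.trans (Multiset.map_id _)
  right_inv := by
    intro V
    apply Subtype.ext
    show Multiset.pmap _ _ _ = (V : Multiset {u : Vote m // u ≠ v₀})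
    apply Multiset.map_injective (Subtype.val_injective)
    rw [Multiset.map_pmap]
    exact Multiset.pmap_eq_map _ _ _ _ |>.trans (Multiset.map_id _)

lemma card_noV0 [NeZero m] :
    Nat.card {W : Sym (Vote m) n // Multiset.count v₀ (W : Multiset (Vote m)) = 0} =
      (Nat.factorial m - 1 + n - 1).choose n := by
  rw [Nat.card_eq_fintype_card, Fintype.card_congr (noV0Equiv n v₀)]
  rw [Sym.card_sym_eq_multichoose, Nat.multichoose_eq]
  congr 2
  rw [Fintype.card_subtype_compl, Fintype.card_subtype_eq]
  congr 1
  rw [Fintype.card_perm, Fintype.card_fin]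

lemma key_id (n F : ℕ) (hF : 2 ≤ F) :
    (F - 1) * (n + F - 1).choose n = (n + F - 1) * (n + F - 2).choose n := by
  obtain ⟨J, rfl⟩ : ∃ J, F = J + 2 := ⟨F - 2, by omega⟩
  have h1 : n + (J + 2) - 1 = n + J + 1 := by omega
  have h2 : n + (J + 2) - 2 = n + J := by omega
  have h3 : J + 2 - 1 = J + 1 := by omega
  rw [h1, h2, h3]
  have hs := Nat.add_one_mul_choose_eq (n + J) J
  have hsymm1 : (n + J).choose J = (n + J).choose n := by
    rw [← Nat.choose_symm (by omega : J ≤ n + J)]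
    congr 1
    omega
  have hsymm2 : (n + J + 1).choose (J + 1) = (n + J + 1).choose n := by
    rw [← Nat.choose_symm (by omega : J + 1 ≤ n + J + 1)]
    congr 1
    omega
  rw [hsymm1, hsymm2] at hs
  calc (J + 1) * (n + J + 1).choose n = (n + J + 1).choose n * (J + 1) := mul_comm _ _
    _ = (n + J).succ * (n + J).choose n := hs.symm
    _ = (n + J + 1) * (n + J).choose n := rfl

end DodgsonAux


open DodgsonAux

/-- For fixed distinct alternatives `a, z`, a fixed integer `k` and `n ≥ 1`, the
number of voting situations with `n` agents for which `Sc_D(z) − Sc_D(a) = k`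
is at most `C(n + m! − 2, n)`; in particular, since there are
`C(n + m! − 1, n)` voting situations in total, the proportion of voting
situations for which `Sc_D(z) − Sc_D(a) = k` is at most
`(m! − 1)/(n + m! − 1)`. -/
theorem stmt_4 {m : ℕ} (hm : 2 ≤ m) (a z : Fin m) (haz : a ≠ z) (k : ℤ)
    (n : ℕ) (hn : 1 ≤ n) :
    Set.ncard {S : Sym (Vote m) n |
        (sScD (S : Multiset (Vote m)) z : ℤ) - sScD (S : Multiset (Vote m)) a = k} ≤
      Nat.choose (n + Nat.factorial m - 2) n ∧
    (Set.ncard {S : Sym (Vote m) n |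
        (sScD (S : Multiset (Vote m)) z : ℤ) - sScD (S : Multiset (Vote m)) a = k} : ℝ) /
        Nat.choose (n + Nat.factorial m - 1) n ≤
      ((Nat.factorial m : ℝ) - 1) / ((n : ℝ) + Nat.factorial m - 1) := by
  classical
  haveI : NeZero m := ⟨by omega⟩
  obtain ⟨v₁, h1z, h1a⟩ := exists_v1 hm haz
  set v₀ : Vote m := rel (Equiv.swap a z) v₁ with hv0
  have h0z : pos v₀ z = m - 1 := by
    rw [hv0]
    show pos (rel (Equiv.swap a z) v₁) z = m - 1
    unfold rel pos
    rw [Equiv.trans_apply, Equiv.swap_apply_right]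
    exact h1a
  have hne : v₀ ≠ v₁ := by
    intro hc
    rw [hc, h1z] at h0z
    omega
  have hF : 2 ≤ Nat.factorial m := le_trans hm (Nat.self_le_factorial m)
  set f₀ : Vote m → Vote m := fun x => if x = v₀ then v₁ else x with hf₀
  set LS : Set (Sym (Vote m) n) := {S : Sym (Vote m) n |
      (sScD (S : Multiset (Vote m)) z : ℤ) - sScD (S : Multiset (Vote m)) a = k} with hLS
  set Φ : Sym (Vote m) n → Sym (Vote m) n :=
    fun S => ⟨(S : Multiset (Vote m)).map f₀, by rw [Multiset.card_map]; exact S.2⟩ with hΦ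
  have hinj : Set.InjOn Φ LS := by
    intro S hS S' hS' h
    have hmm : (S : Multiset (Vote m)).map f₀ = (S' : Multiset (Vote m)).map f₀ :=
      congrArg Subtype.val h
    obtain ⟨c1, c2, c3⟩ := count_map_f0 hne (S : Multiset (Vote m))
    obtain ⟨c1', c2', c3'⟩ := count_map_f0 hne (S' : Multiset (Vote m))
    apply Subtype.ext
    show (S : Multiset (Vote m)) = (S' : Multiset (Vote m))
    apply chain_unique haz h1z h1a hv0 hne
    · intro u hu0 hu1
      rw [← c1 u hu0 hu1, ← c1' u hu0 hu1, hmm]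
    · rw [← c3, ← c3', hmm]
    · exact hS.trans hS'.symm
  have himg : Φ '' LS ⊆ {W : Sym (Vote m) n |
      Multiset.count v₀ (W : Multiset (Vote m)) = 0} := by
    rintro W ⟨S, _, rfl⟩
    exact (count_map_f0 hne (S : Multiset (Vote m))).2.1
  have hcard1 : LS.ncard ≤ Nat.choose (n + Nat.factorial m - 2) n := by
    calc LS.ncard = (Φ '' LS).ncard := (Set.ncard_image_of_injOn hinj).symm
      _ ≤ Set.ncard {W : Sym (Vote m) n |
            Multiset.count v₀ (W : Multiset (Vote m)) = 0} :=
          Set.ncard_le_ncard himg (Set.toFinite _)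
      _ = Nat.card {W : Sym (Vote m) n //
            Multiset.count v₀ (W : Multiset (Vote m)) = 0} :=
          (Nat.card_coe_set_eq _).symm
      _ = (Nat.factorial m - 1 + n - 1).choose n := card_noV0 n v₀
      _ = Nat.choose (n + Nat.factorial m - 2) n := by congr 1; omega
  refine ⟨hcard1, ?_⟩
  -- the ratio statement
  have hC1pos : 0 < Nat.choose (n + Nat.factorial m - 1) n := Nat.choose_pos (by omega)
  have hkey := key_id n (Nat.factorial m) hF
  have hnat : LS.ncard * (n + Nat.factorial m - 1) ≤
      (Nat.factorial m - 1) * Nat.choose (n + Nat.factorial m - 1) n := by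
    calc LS.ncard * (n + Nat.factorial m - 1)
        ≤ Nat.choose (n + Nat.factorial m - 2) n * (n + Nat.factorial m - 1) :=
          Nat.mul_le_mul_right _ hcard1
      _ = (n + Nat.factorial m - 1) * Nat.choose (n + Nat.factorial m - 2) n := mul_comm _ _
      _ = (Nat.factorial m - 1) * Nat.choose (n + Nat.factorial m - 1) n := hkey.symm
  have hcast1 : ((n + Nat.factorial m - 1 : ℕ) : ℝ) = (n : ℝ) + Nat.factorial m - 1 := by
    rw [show n + Nat.factorial m - 1 = n + (Nat.factorial m - 1) by omega]
    rw [Nat.cast_add, Nat.cast_sub (by omega : 1 ≤ Nat.factorial m)]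
    push_cast
    ring
  have hcast2 : ((Nat.factorial m - 1 : ℕ) : ℝ) = (Nat.factorial m : ℝ) - 1 := by
    rw [Nat.cast_sub (by omega : 1 ≤ Nat.factorial m)]
    push_cast
    ring
  have hbpos : (0 : ℝ) < (Nat.choose (n + Nat.factorial m - 1) n : ℝ) := by
    exact_mod_cast hC1pos
  have hdpos : (0 : ℝ) < (n : ℝ) + Nat.factorial m - 1 := by
    have h2 : (2 : ℝ) ≤ (Nat.factorial m : ℝ) := by exact_mod_cast hF
    have h0 : (0 : ℝ) ≤ (n : ℝ) := Nat.cast_nonneg n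
    linarith
  rw [div_le_div_iff₀ hbpos hdpos]
  calc (LS.ncard : ℝ) * ((n : ℝ) + Nat.factorial m - 1)
      = ((LS.ncard * (n + Nat.factorial m - 1) : ℕ) : ℝ) := by
        rw [Nat.cast_mul, hcast1]
    _ ≤ (((Nat.factorial m - 1) * Nat.choose (n + Nat.factorial m - 1) n : ℕ) : ℝ) := by
        exact_mod_cast hnat
    _ = ((Nat.factorial m : ℝ) - 1) * (Nat.choose (n + Nat.factorial m - 1) n : ℝ) := by
        rw [Nat.cast_mul, hcast2]
end

section
/- If, in a profile P, the alternative a is a Tideman winner and the alternative z is a DQ winner, then 0 ≤ Sc_T[P](z) − Sc_T[P](a) < m. -/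
open Finset Filter

/-- If `a` is a Tideman winner and `z` is a DQ winner of a profile `P`, then
`0 ≤ Sc_T[P](z) − Sc_T[P](a) < m`. -/
theorem stmt_5 {m n : ℕ} (hm : 2 ≤ m) (P : Profile m n) (a z : Fin m)
    (ha : ∀ b, ScT P a ≤ ScT P b) (hz : ∀ b, ScQ P z ≤ ScQ P b) :
    ScT P a ≤ ScT P z ∧ ScT P z < ScT P a + m := by
  refine ⟨ha z, ?_⟩
  have h1 : ScT P z ≤ 2 * ScQ P z := by
    unfold ScT ScQ
    rw [Finset.mul_sum]
    exact Finset.sum_le_sum (fun b _ => by omega)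
  have hc : (Finset.univ.filter (fun b => b ≠ a)).card = m - 1 := by
    rw [Finset.filter_ne', Finset.card_erase_of_mem (Finset.mem_univ a),
      Finset.card_univ, Fintype.card_fin]
  have h2 : 2 * ScQ P a ≤ ScT P a + (m - 1) := by
    unfold ScT ScQ
    rw [Finset.mul_sum]
    calc ∑ b ∈ Finset.univ.filter (fun b => b ≠ a), 2 * ((adv P b a + 1) / 2)
        ≤ ∑ b ∈ Finset.univ.filter (fun b => b ≠ a), (adv P b a + 1) :=
          Finset.sum_le_sum (fun b _ => by omega)
      _ = ∑ b ∈ Finset.univ.filter (fun b => b ≠ a), adv P b a + (m - 1) := by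
          rw [Finset.sum_add_distrib, Finset.sum_const, smul_eq_mul, mul_one, hc]
  have h3 : ScQ P z ≤ ScQ P a := hz a
  omega
end

section
/- Fix distinct alternatives a, z ∈ A and n ≥ 1. The number of voting situations with n agents on A in which a is a Tideman winner and z is a DQ winner is at most m·C(n + m! − 2, n). -/
open Finset Filter

-- auxiliary lemmas
lemma snAbove_cons {m : ℕ} (v : Vote m) (t : Multiset (Vote m)) (x y : Fin m) :
    snAbove (v ::ₘ t) x y = snAbove t x y + if v x < v y then 1 else 0 := by
  unfold snAbove
  by_cases h : v x < v y
  · simp [Multiset.filter_cons, h]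
  · simp [Multiset.filter_cons, h]

lemma exists_topbot {m : ℕ} (hm : 2 ≤ m) (x y : Fin m) (hxy : x ≠ y) :
    ∃ v : Vote m, (∀ b, b ≠ x → v x < v b) ∧ (∀ b, b ≠ y → v b < v y) := by
  have hm0 : 0 < m := by omega
  set p0 : Fin m := ⟨0, hm0⟩ with hp0
  set pL : Fin m := ⟨m - 1, by omega⟩ with hpL
  set s1 := Equiv.swap x p0 with hs1
  set v := s1.trans (Equiv.swap (s1 y) pL) with hv
  have h1 : s1 x = p0 := Equiv.swap_apply_left x p0
  have hy0 : s1 y ≠ p0 := by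
    intro h
    exact hxy (s1.injective (h1.trans h.symm))
  have hL0 : pL ≠ p0 := by
    simp only [hpL, hp0, ne_eq, Fin.mk.injEq]
    omega
  have hvx : v x = p0 := by
    rw [hv, Equiv.trans_apply, h1, Equiv.swap_apply_of_ne_of_ne (Ne.symm hy0) (Ne.symm hL0)]
  have hvy : v y = pL := by
    rw [hv, Equiv.trans_apply, Equiv.swap_apply_left]
  refine ⟨v, ?_, ?_⟩
  · intro b hb
    have : v b ≠ v x := fun h => hb (v.injective h)
    rw [hvx] at this ⊢
    have : (v b).1 ≠ 0 := by
      intro h; exact this (Fin.ext h)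
    exact Fin.mk_lt_of_lt_val (by omega)
  · intro b hb
    have hne : v b ≠ v y := fun h => hb (v.injective h)
    rw [hvy] at hne ⊢
    have h2 : (v b).1 ≠ m - 1 := by
      intro h; exact hne (Fin.ext h)
    have h3 : (v b).1 < m := (v b).2
    exact Fin.lt_def.2 (by simp only [hpL]; omega)

lemma core_swap {m : ℕ} (a z : Fin m) (haz : a ≠ z) (u w : Vote m)
    (hu_top : ∀ b, b ≠ a → u a < u b) (hu_bot : ∀ b, b ≠ z → u b < u z)
    (hw_top : ∀ b, b ≠ z → w z < w b) (hw_bot : ∀ b, b ≠ a → w b < w a)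
    (S : Multiset (Vote m)) (hwS : w ∈ S) :
    (sScT S z : ℤ) - sScT S a + 1 ≤
      (sScT (u ::ₘ S.erase w) z : ℤ) - sScT (u ::ₘ S.erase w) a := by
  set E := S.erase w with hE
  have hSE : S = w ::ₘ E := (Multiset.cons_erase hwS).symm
  have zfacts : ∀ b, b ≠ z →
      sadv S b z = snAbove E b z - (snAbove E z b + 1) ∧
      sadv (u ::ₘ E) b z = (snAbove E b z + 1) - snAbove E z b := by
    intro b hbz
    have h1 : snAbove S b z = snAbove E b z := by
      rw [hSE, snAbove_cons, if_neg (lt_asymm (hw_top b hbz)), add_zero]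
    have h2 : snAbove S z b = snAbove E z b + 1 := by
      rw [hSE, snAbove_cons, if_pos (hw_top b hbz)]
    have h3 : snAbove (u ::ₘ E) b z = snAbove E b z + 1 := by
      rw [snAbove_cons, if_pos (hu_bot b hbz)]
    have h4 : snAbove (u ::ₘ E) z b = snAbove E z b := by
      rw [snAbove_cons, if_neg (lt_asymm (hu_bot b hbz)), add_zero]
    unfold sadv
    rw [h1, h2, h3, h4]
    exact ⟨rfl, rfl⟩
  have afacts : ∀ b, b ≠ a →
      sadv S b a = (snAbove E b a + 1) - snAbove E a b ∧
      sadv (u ::ₘ E) b a = snAbove E b a - (snAbove E a b + 1) := by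
    intro b hba
    have h1 : snAbove S b a = snAbove E b a + 1 := by
      rw [hSE, snAbove_cons, if_pos (hw_bot b hba)]
    have h2 : snAbove S a b = snAbove E a b := by
      rw [hSE, snAbove_cons, if_neg (lt_asymm (hw_bot b hba)), add_zero]
    have h3 : snAbove (u ::ₘ E) b a = snAbove E b a := by
      rw [snAbove_cons, if_neg (lt_asymm (hu_top b hba)), add_zero]
    have h4 : snAbove (u ::ₘ E) a b = snAbove E a b + 1 := by
      rw [snAbove_cons, if_pos (hu_top b hba)]
    unfold sadv
    rw [h1, h2, h3, h4]
    exact ⟨rfl, rfl⟩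
  have hzmono : ∀ b ∈ univ.filter (fun b => b ≠ z), sadv S b z ≤ sadv (u ::ₘ E) b z := by
    intro b hb
    obtain ⟨e1, e2⟩ := zfacts b (by simpa using hb)
    omega
  have hamono : ∀ b ∈ univ.filter (fun b => b ≠ a), sadv (u ::ₘ E) b a ≤ sadv S b a := by
    intro b hb
    obtain ⟨e1, e2⟩ := afacts b (by simpa using hb)
    omega
  by_cases hcase : snAbove E z a ≤ snAbove E a z
  · have h1 : sScT S z < sScT (u ::ₘ E) z := by
      apply Finset.sum_lt_sum hzmono
      refine ⟨a, by simp [haz], ?_⟩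
      obtain ⟨e1, e2⟩ := zfacts a haz
      omega
    have h2 : sScT (u ::ₘ E) a ≤ sScT S a := Finset.sum_le_sum hamono
    omega
  · have h1 : sScT S z ≤ sScT (u ::ₘ E) z := Finset.sum_le_sum hzmono
    have h2 : sScT (u ::ₘ E) a < sScT S a := by
      apply Finset.sum_lt_sum hamono
      refine ⟨z, by simp [Ne.symm haz], ?_⟩
      obtain ⟨e1, e2⟩ := afacts z (Ne.symm haz)
      omega
    omega

lemma count_map_merge {m : ℕ} (u w : Vote m) (huw : u ≠ w) (x : Vote m)
    (S : Multiset (Vote m)) :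
    (S.map (fun v => if v = u then w else v)).count x =
      if x = w then S.count u + S.count w else if x = u then 0 else S.count x := by
  induction S using Multiset.induction_on with
  | empty => simp
  | cons v s ih =>
    simp only [Multiset.map_cons, Multiset.count_cons, ih]
    by_cases hvu : v = u <;> by_cases hxw : x = w <;> by_cases hxu : x = u <;>
      subst_vars <;> simp_all <;>
      first | omega | tauto | (split_ifs <;> simp_all <;> omega) | (split_ifs <;> simp_all)

lemma merge_eq {m : ℕ} (u w : Vote m) (huw : u ≠ w) (S₁ S₂ : Multiset (Vote m))
    (hmap : S₁.map (fun v => if v = u then w else v) =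
      S₂.map (fun v => if v = u then w else v))
    (hcount : S₁.count u = S₂.count u) : S₁ = S₂ := by
  ext x
  have h := congrArg (Multiset.count x) hmap
  rw [count_map_merge u w huw x S₁, count_map_merge u w huw x S₂] at h
  have hw := congrArg (Multiset.count w) hmap
  rw [count_map_merge u w huw w S₁, count_map_merge u w huw w S₂, if_pos rfl, if_pos rfl] at hw
  by_cases hxw : x = w
  · subst hxw; omega
  · by_cases hxu : x = u
    · subst hxu; exact hcount
    · simp [hxw, hxu] at h; exact h

lemma chain_swap {m : ℕ} (a z : Fin m) (haz : a ≠ z) (u w : Vote m) (huw : u ≠ w)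
    (hu_top : ∀ b, b ≠ a → u a < u b) (hu_bot : ∀ b, b ≠ z → u b < u z)
    (hw_top : ∀ b, b ≠ z → w z < w b) (hw_bot : ∀ b, b ≠ a → w b < w a) :
    ∀ (c : ℕ) (S₁ S₂ : Multiset (Vote m)),
      S₁.map (fun v => if v = u then w else v) =
        S₂.map (fun v => if v = u then w else v) →
      S₂.count u = S₁.count u + c →
      (sScT S₁ z : ℤ) - sScT S₁ a + c ≤ (sScT S₂ z : ℤ) - sScT S₂ a := by
  intro c
  induction c with
  | zero =>
    intro S₁ S₂ hmap hcount
    have : S₁ = S₂ := merge_eq u w huw S₁ S₂ hmap (by omega)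
    subst this; simp
  | succ c ih =>
    intro S₁ S₂ hmap hcount
    have hcw := congrArg (Multiset.count w) hmap
    rw [count_map_merge u w huw w S₁, count_map_merge u w huw w S₂, if_pos rfl, if_pos rfl] at hcw
    have hw1 : w ∈ S₁ := by
      rw [← Multiset.count_pos]; omega
    have hmap' : (u ::ₘ S₁.erase w).map (fun v => if v = u then w else v) =
        S₁.map (fun v => if v = u then w else v) := by
      conv_rhs => rw [← Multiset.cons_erase hw1]
      simp [huw, Ne.symm huw]
    have hcount' : (u ::ₘ S₁.erase w).count u = S₁.count u + 1 := by
      rw [Multiset.count_cons_self, Multiset.count_erase_of_ne huw]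
    have hstep := core_swap a z haz u w hu_top hu_bot hw_top hw_bot S₁ hw1
    have hrest := ih (u ::ₘ S₁.erase w) S₂ (hmap'.trans hmap) (by omega)
    push_cast at hrest ⊢
    omega

/-- For fixed distinct alternatives `a, z` and `n ≥ 1`, the number of voting
situations with `n` agents in which `a` is a Tideman winner and `z` is a DQ
winner is at most `m · C(n + m! − 2, n)`. -/
theorem stmt_7 {m : ℕ} (hm : 2 ≤ m) (a z : Fin m) (haz : a ≠ z)
    (n : ℕ) (hn : 1 ≤ n) :
    Set.ncard {S : Sym (Vote m) n |
        sTWinner (S : Multiset (Vote m)) a ∧ sQWinner (S : Multiset (Vote m)) z} ≤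
      m * Nat.choose (n + Nat.factorial m - 2) n := by
  obtain ⟨u, hu_top, hu_bot⟩ := exists_topbot hm a z haz
  obtain ⟨w, hw_top, hw_bot⟩ := exists_topbot hm z a haz.symm
  have huw : u ≠ w := by
    intro h
    have h1 := hu_top z haz.symm
    have h2 := hw_top a haz
    rw [← h] at h2
    exact absurd (h1.trans h2) (lt_irrefl _)
  set E : Set (Sym (Vote m) n) :=
    {S | sTWinner (S : Multiset (Vote m)) a ∧ sQWinner (S : Multiset (Vote m)) z} with hEdef
  have hcard_ne : ∀ x : Fin m, (Finset.univ.filter (fun b => b ≠ x)).card = m - 1 := by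
    intro x
    rw [Finset.filter_ne']
    simp
  have hbound : ∀ S : Sym (Vote m) n, S ∈ E →
      sScT (S : Multiset (Vote m)) a ≤ sScT (S : Multiset (Vote m)) z ∧
      sScT (S : Multiset (Vote m)) z ≤ sScT (S : Multiset (Vote m)) a + (m - 1) := by
    intro S hS
    refine ⟨hS.1 z, ?_⟩
    have key1 : sScT (S : Multiset (Vote m)) z ≤ 2 * sScQ (S : Multiset (Vote m)) z := by
      unfold sScT sScQ
      rw [Finset.mul_sum]
      exact Finset.sum_le_sum (fun b _ => by omega)
    have key2 : 2 * sScQ (S : Multiset (Vote m)) a ≤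
        sScT (S : Multiset (Vote m)) a + (m - 1) := by
      unfold sScT sScQ
      rw [Finset.mul_sum]
      calc ∑ b ∈ Finset.univ.filter (fun b => b ≠ a),
            2 * ((sadv (S : Multiset (Vote m)) b a + 1) / 2)
          ≤ ∑ b ∈ Finset.univ.filter (fun b => b ≠ a),
            (sadv (S : Multiset (Vote m)) b a + 1) :=
            Finset.sum_le_sum (fun b _ => by omega)
        _ = (∑ b ∈ Finset.univ.filter (fun b => b ≠ a),
            sadv (S : Multiset (Vote m)) b a) + (m - 1) := by
            rw [Finset.sum_add_distrib, Finset.sum_const, smul_eq_mul, mul_one, hcard_ne a]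
    have key3 := hS.2 a
    omega
  have hfu : ∀ (T : Multiset (Vote m)) (x : Vote m),
      x ∈ T.map (fun v => if v = u then w else v) → x ≠ u := by
    intro T x hx hxu
    obtain ⟨v, hv, hfv⟩ := Multiset.mem_map.1 hx
    have hfv' : (if v = u then w else v) = u := hfv.trans hxu
    by_cases hvu : v = u
    · rw [if_pos hvu] at hfv'; exact huw hfv'.symm
    · rw [if_neg hvu] at hfv'; exact hvu hfv' 
  have hΦcard : ∀ S : Sym (Vote m) n,
      (((S : Multiset (Vote m)).map (fun v => if v = u then w else v)).attach.map
        (fun x => (⟨x.1, hfu _ _ x.2⟩ : {v : Vote m // v ≠ u}))).card = n := by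
    intro S
    rw [Multiset.card_map, Multiset.card_attach, Multiset.card_map]
    exact S.2
  set Φ : Sym (Vote m) n → Fin m × Sym {v : Vote m // v ≠ u} n :=
    fun S => (⟨(sScT (S : Multiset (Vote m)) z - sScT (S : Multiset (Vote m)) a) % m,
        Nat.mod_lt _ (by omega)⟩,
      ⟨((S : Multiset (Vote m)).map (fun v => if v = u then w else v)).attach.map
        (fun x => ⟨x.1, hfu _ _ x.2⟩), hΦcard S⟩) with hΦ
  have hrecover : ∀ S : Sym (Vote m) n,
      ((Φ S).2 : Multiset {v : Vote m // v ≠ u}).map Subtype.val =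
        (S : Multiset (Vote m)).map (fun v => if v = u then w else v) := by
    intro S
    have heq : ((Φ S).2 : Multiset {v : Vote m // v ≠ u}) =
        ((S : Multiset (Vote m)).map (fun v => if v = u then w else v)).attach.map
          (fun x => ⟨x.1, hfu _ _ x.2⟩) := rfl
    rw [heq, Multiset.map_map]
    exact Multiset.attach_map_val _
  have hinjhalf : ∀ S₁ S₂ : Sym (Vote m) n, S₁ ∈ E → S₂ ∈ E → Φ S₁ = Φ S₂ →
      Multiset.count u (S₁ : Multiset (Vote m)) ≤ Multiset.count u (S₂ : Multiset (Vote m)) →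
      S₁ = S₂ := by
    intro S₁ S₂ h1 h2 hΦeq hle
    have hmapeq : ((S₁ : Multiset (Vote m))).map (fun v => if v = u then w else v) =
        ((S₂ : Multiset (Vote m))).map (fun v => if v = u then w else v) := by
      have := congrArg (fun p : Fin m × Sym {v : Vote m // v ≠ u} n =>
        (p.2 : Multiset {v : Vote m // v ≠ u}).map Subtype.val) hΦeq
      rwa [hrecover S₁, hrecover S₂] at this
    have hb1 := hbound S₁ h1
    have hb2 := hbound S₂ h2
    have hmod := congrArg (fun p : Fin m × Sym {v : Vote m // v ≠ u} n => (p.1 : Fin m).1) hΦeq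
    simp only [hΦ] at hmod
    have hg : sScT (S₁ : Multiset (Vote m)) z - sScT (S₁ : Multiset (Vote m)) a =
        sScT (S₂ : Multiset (Vote m)) z - sScT (S₂ : Multiset (Vote m)) a := by
      rw [Nat.mod_eq_of_lt (by omega), Nat.mod_eq_of_lt (by omega)] at hmod
      exact hmod
    obtain ⟨c, hc⟩ : ∃ c, Multiset.count u (S₂ : Multiset (Vote m)) =
        Multiset.count u (S₁ : Multiset (Vote m)) + c := ⟨_, (Nat.add_sub_cancel' hle).symm⟩
    have hchain := chain_swap a z haz u w huw hu_top hu_bot hw_top hw_bot c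
      (S₁ : Multiset (Vote m)) (S₂ : Multiset (Vote m)) hmapeq hc
    have hc0 : c = 0 := by omega
    subst hc0
    have : (S₁ : Multiset (Vote m)) = (S₂ : Multiset (Vote m)) :=
      merge_eq u w huw _ _ hmapeq (by omega)
    exact Subtype.ext this
  have hinj : Set.InjOn Φ E := by
    intro S₁ h1 S₂ h2 heq
    rcases le_total (Multiset.count u (S₁ : Multiset (Vote m)))
      (Multiset.count u (S₂ : Multiset (Vote m))) with h | h
    · exact hinjhalf S₁ S₂ h1 h2 heq h
    · exact (hinjhalf S₂ S₁ h2 h1 heq.symm h).symm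
  have hfact : 2 ≤ Nat.factorial m := by
    calc 2 = Nat.factorial 2 := rfl
      _ ≤ Nat.factorial m := Nat.factorial_le hm
  have hfin : Fintype.card (Fin m × Sym {v : Vote m // v ≠ u} n) =
      m * (n + Nat.factorial m - 2).choose n := by
    rw [Fintype.card_prod, Fintype.card_fin, Sym.card_sym_eq_choose n]
    have hsub : Fintype.card {v : Vote m // v ≠ u} = Nat.factorial m - 1 := by
      have h1 : Fintype.card {v : Vote m // v ≠ u} = Fintype.card (Vote m) - 1 := by
        simp [Fintype.card_subtype_compl (fun v : Vote m => v = u)]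
      rw [h1]
      congr 1
      rw [Fintype.card_perm, Fintype.card_fin]
    rw [hsub]
    congr 2
    omega
  calc E.ncard = (Φ '' E).ncard := (Set.ncard_image_of_injOn hinj).symm
    _ ≤ (Set.univ : Set (Fin m × Sym {v : Vote m // v ≠ u} n)).ncard :=
        Set.ncard_le_ncard (Set.subset_univ _) Set.finite_univ
    _ = m * Nat.choose (n + Nat.factorial m - 2) n := by
        rw [Set.ncard_univ, Nat.card_eq_fintype_card, hfin]
end

section
/- For n ≥ 1, the number of voting situations with n agents on A in which the set of Tideman winners differs from the set of DQ winners is at most (m − 1)·m²·C(n + m! − 2, n). -/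
open Finset Filter

/-!
Since `Sc_T ≤ 2 Sc_Q ≤ Sc_T + m - 1`, whenever the Tideman and DQ winner sets differ there are
alternatives `a ≠ b` with `Sc_T(a) = Sc_T(b) + c` for some `c < m`; there are `(m - 1) m²` such
triples `(a, b, c)`. Fix one, and a vote `v` ranking `b` first and `a` second, and let `w` be `v`
with `a` and `b` exchanged. Replacing every `w` by `v` only changes `n_{ab}` and `n_{ba}`, and on
situations with `Sc_T(a) = Sc_T(b) + c` these are recovered from the score gap, hence so is the
number of replaced votes. So the replacement is injective there, with values in the voting
situations over the `m! - 1` votes other than `w`, of which there are `C(n + m! - 2, n)`.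
-/
open Function

namespace Multiset
variable {α : Type*} [DecidableEq α]

theorem map_update_id_eq (v w : α) (S : Multiset α) :
    S.map (update id w v) = S.filter (· ≠ w) + replicate (S.count w) v := by
  conv_lhs => rw [← filter_add_not (· = w) S]
  rw [map_add, filter_eq', map_replicate, update_self, add_comm]
  congr 1
  refine (map_congr rfl fun u hu => ?_).trans (map_id _)
  exact update_of_ne (mem_filter.1 hu).2 v id

theorem eq_of_map_update_id_eq {v w : α} {S S' : Multiset α}
    (hmap : S.map (update id w v) = S'.map (update id w v)) (hcount : S.count w = S'.count w) :
    S = S' := by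
  rw [map_update_id_eq, map_update_id_eq, hcount, add_left_inj] at hmap
  rw [← filter_add_not (· = w) S, ← filter_add_not (· = w) S', filter_eq', filter_eq', hcount]
  exact congrArg _ hmap

theorem countP_map_update_id_of_iff (p : α → Prop) [DecidablePred p] {v w : α} (h : p v ↔ p w)
    (S : Multiset α) : (S.map (update id w v)).countP p = S.countP p := by
  rw [countP_map, ← countP_eq_card_filter]
  refine countP_congr rfl fun u _ => ?_
  by_cases hu : u = w
  · subst hu; simpa using h
  · rw [update_of_ne hu, id]

theorem countP_map_update_id_of_not (p : α → Prop) [DecidablePred p] {v w : α} (hv : p v)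
    (hw : ¬ p w) (S : Multiset α) :
    (S.map (update id w v)).countP p = S.countP p + S.count w := by
  rw [map_update_id_eq, countP_add, countP_filter,
    (countP_eq_card (s := replicate _ v)).2 fun u hu => (eq_of_mem_replicate hu) ▸ hv,
    card_replicate]
  exact congrArg (· + _) <| countP_congr rfl fun u _ =>
    propext ⟨And.left, fun hu => ⟨hu, by rintro rfl; exact hw hu⟩⟩

end Multiset

theorem Sym.ncard_le_choose_of_injOn_map {α : Type*} [Fintype α] {n : ℕ} {s : Set (Sym α n)}
    {f : α → α} {w : α} (hf : ∀ u, f u ≠ w) (hinj : Set.InjOn (Sym.map f) s) :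
    s.ncard ≤ (n + Fintype.card α - 2).choose n := by
  classical
  let g : α → {u // u ≠ w} := fun u => ⟨f u, hf u⟩
  have hinj' : Set.InjOn (Sym.map g) s := fun S hS S' hS' h =>
    hinj hS hS' <| by
      simpa [g, Sym.map_map, Function.comp_def] using congrArg (Sym.map Subtype.val) h
  have hcard : Fintype.card {u // u ≠ w} + 1 = Fintype.card α := by
    rw [Fintype.card_subtype_compl, Fintype.card_subtype_eq]
    have := Fintype.card_pos_iff.mpr ⟨w⟩
    omega
  calc s.ncard ≤ (Set.univ : Set (Sym {u // u ≠ w} n)).ncard :=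
        Set.ncard_le_ncard_of_injOn _ (fun _ _ => Set.mem_univ _) hinj' Set.finite_univ
    _ = (n + Fintype.card α - 2).choose n := by
        rw [Set.ncard_univ, Nat.card_eq_fintype_card, Sym.card_sym_eq_choose]
        congr 1
        omega

section Voting

variable {m : ℕ}

lemma sScT_le_two_mul_sScQ (S : Multiset (Vote m)) (a : Fin m) : sScT S a ≤ 2 * sScQ S a := by
  rw [sScT, sScQ, mul_sum]
  exact sum_le_sum fun _ _ => by omega

lemma two_mul_sScQ_le_sScT_add (S : Multiset (Vote m)) (a : Fin m) :
    2 * sScQ S a ≤ sScT S a + (m - 1) := by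
  have hcard : (univ.filter (· ≠ a)).card = m - 1 := by
    rw [filter_ne', card_erase_of_mem (mem_univ a), card_univ, Fintype.card_fin]
  rw [sScT, sScQ, mul_sum, ← hcard, card_eq_sum_ones, ← sum_add_distrib]
  exact sum_le_sum fun _ _ => by omega

lemma exists_sScT_eq_add_of_winners_ne {S : Multiset (Vote m)}
    (h : {x | sTWinner S x} ≠ {x | sQWinner S x}) :
    ∃ a b : Fin m, a ≠ b ∧ ∃ c < m, sScT S a = sScT S b + c := by
  obtain ⟨x, hx⟩ : ∃ x, ¬(sTWinner S x ↔ sQWinner S x) := by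
    by_contra! hc
    exact h (Set.ext hc)
  have key : ∀ a b : Fin m, a ≠ b → sScT S b ≤ sScT S a → sScT S a < sScT S b + m →
      ∃ a b : Fin m, a ≠ b ∧ ∃ c < m, sScT S a = sScT S b + c := fun a b hne _ _ =>
    ⟨a, b, hne, sScT S a - sScT S b, by omega, by omega⟩
  have hT := sScT_le_two_mul_sScQ S
  have hQ := two_mul_sScQ_le_sScT_add S
  by_cases hTx : sTWinner S x
  · obtain ⟨z, hz⟩ : ∃ z, sScQ S z < sScQ S x := by simpa [sQWinner, hTx] using hx
    have := hT z; have := hQ x; have := hTx z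
    exact key z x (by rintro rfl; omega) (by omega) (by omega)
  · obtain ⟨z, hz⟩ : ∃ z, sScT S z < sScT S x := by simpa [sTWinner] using hTx
    have hQx : sQWinner S x := by simpa [hTx] using hx
    have := hT x; have := hQ z; have := hQx z
    exact key x z (by rintro rfl; omega) (by omega) (by omega)

lemma exists_vote_top_two {a b : Fin m} (hab : a ≠ b) :
    ∃ v : Vote m, (v b : ℕ) = 0 ∧ (v a : ℕ) = 1 := by
  have hm : 2 ≤ m := by have := Fin.val_ne_of_ne hab; omega
  let p₀ : Fin m := ⟨0, by omega⟩
  let p₁ : Fin m := ⟨1, hm⟩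
  let π := Equiv.swap b p₀
  have hπa : π a ≠ p₀ := fun h =>
    hab (π.injective (h.trans (Equiv.swap_apply_left b p₀).symm))
  refine ⟨π.trans (Equiv.swap (π a) p₁), ?_, ?_⟩
  · rw [Equiv.trans_apply, Equiv.swap_apply_left,
      Equiv.swap_apply_of_ne_of_ne hπa.symm (by simp [p₀, p₁, Fin.ext_iff])]
  · rw [Equiv.trans_apply, Equiv.swap_apply_left]

lemma snAbove_add_snAbove (S : Multiset (Vote m)) {x y : Fin m} (hxy : x ≠ y) :
    snAbove S x y + snAbove S y x = Multiset.card S := by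
  rw [snAbove, snAbove, ← Multiset.card_add]
  conv_rhs => rw [← Multiset.filter_add_not (fun u : Vote m => u x < u y) S]
  refine congrArg (fun T => Multiset.card (_ + T)) (Multiset.filter_congr fun u _ => ?_)
  have := u.injective.ne hxy
  rw [not_lt, le_iff_lt_or_eq, or_iff_left this.symm]

lemma sScT_add_sadv_eq_of_forall_ne {S T : Multiset (Vote m)} {a b : Fin m} (hab : a ≠ b)
    (h : ∀ x, x ≠ a → x ≠ b → sadv S x a = sadv T x a) :
    sScT S a + sadv T b a = sScT T a + sadv S b a := by
  have hb : b ∈ univ.filter (· ≠ a) := by simp [hab.symm]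
  rw [sScT, sScT, ← add_sum_erase _ _ hb, ← add_sum_erase _ _ hb,
    sum_congr rfl fun x hx => h x (mem_filter.1 (mem_of_mem_erase hx)).2 (ne_of_mem_erase hx)]
  ring

lemma snAbove_map_update_id {v w : Vote m} {x y : Fin m} (h : v x < v y ↔ w x < w y)
    (S : Multiset (Vote m)) : snAbove (S.map (update id w v)) x y = snAbove S x y := by
  simp only [snAbove, ← Multiset.countP_eq_card_filter]
  exact Multiset.countP_map_update_id_of_iff _ h S

/-- Replaces every vote `v ∘ (a b)` by `v`; when `a`, `b` are adjacent in `v`, this changes only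
the comparisons between `a` and `b`. -/
def mergeSwap (v : Vote m) (a b : Fin m) : Vote m → Vote m :=
  update id ((Equiv.swap a b).trans v) v

variable {v : Vote m} {a b : Fin m}

lemma sadv_map_mergeSwap (hvb : (v b : ℕ) = 0) (hva : (v a : ℕ) = 1) {x z : Fin m}
    (hxa : x ≠ a) (hxb : x ≠ b) (hz : z = a ∨ z = b) (S : Multiset (Vote m)) :
    sadv (S.map (mergeSwap v a b)) x z = sadv S x z := by
  have hx : 2 ≤ (v x : ℕ) := by
    have := Fin.val_ne_of_ne (v.injective.ne hxa)
    have := Fin.val_ne_of_ne (v.injective.ne hxb)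
    omega
  have hswap : ∀ y, y ≠ a → y ≠ b → (Equiv.swap a b).trans v y = v y := fun y hya hyb =>
    congrArg v (Equiv.swap_apply_of_ne_of_ne hya hyb)
  have hz' : ((Equiv.swap a b).trans v z : ℕ) ≤ 1 := by
    rcases hz with rfl | rfl <;> simp [hvb, hva]
  have hzv : (v z : ℕ) ≤ 1 := by rcases hz with rfl | rfl <;> omega
  rw [sadv, sadv, mergeSwap, snAbove_map_update_id, snAbove_map_update_id] <;>
    simp only [Fin.lt_def, hswap x hxa hxb] <;> omega

/-- The Tideman gap `Sc_T(a) - Sc_T(b)` of `S` equals `adv(b,a) - adv(a,b)` up to terms that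
depend only on the merged situation, so it pins down `n_{ba}`. -/
lemma snAbove_eq_of_map_mergeSwap_eq (hvb : (v b : ℕ) = 0) (hva : (v a : ℕ) = 1)
    {S S' : Multiset (Vote m)} {c : ℕ} (hcard : Multiset.card S = Multiset.card S')
    (hS : sScT S a = sScT S b + c) (hS' : sScT S' a = sScT S' b + c)
    (hmap : S.map (mergeSwap v a b) = S'.map (mergeSwap v a b)) :
    snAbove S b a = snAbove S' b a := by
  have hab : a ≠ b := by rintro rfl; omega
  set f := mergeSwap v a b
  have hgap : ∀ R : Multiset (Vote m),
      sScT R a + sadv (R.map f) b a = sScT (R.map f) a + sadv R b a ∧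
      sScT R b + sadv (R.map f) a b = sScT (R.map f) b + sadv R a b :=
    fun R => ⟨sScT_add_sadv_eq_of_forall_ne hab fun x hxa hxb =>
        (sadv_map_mergeSwap hvb hva hxa hxb (Or.inl rfl) R).symm,
      sScT_add_sadv_eq_of_forall_ne hab.symm fun x hxb hxa =>
        (sadv_map_mergeSwap hvb hva hxa hxb (Or.inr rfl) R).symm⟩
  have h := hgap S
  have h' := hgap S'
  have := snAbove_add_snAbove S hab.symm
  have := snAbove_add_snAbove S' hab.symm
  rw [hmap] at h
  simp only [sadv] at h h'
  omega

lemma injOn_sym_map_mergeSwap (hvb : (v b : ℕ) = 0) (hva : (v a : ℕ) = 1) (n c : ℕ) :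
    Set.InjOn (Sym.map (mergeSwap v a b))
      {S : Sym (Vote m) n |
        sScT (S : Multiset (Vote m)) a = sScT (S : Multiset (Vote m)) b + c} := by
  intro S hS S' hS' h
  have hmap : (S : Multiset (Vote m)).map (mergeSwap v a b) =
      (S' : Multiset (Vote m)).map (mergeSwap v a b) := by
    rw [← Sym.coe_map, ← Sym.coe_map, h]
  have hN := snAbove_eq_of_map_mergeSwap_eq (S := S) (S' := S') hvb hva (S.2.trans S'.2.symm)
    hS hS' hmap
  have hcount : ∀ R : Multiset (Vote m), (R.map (mergeSwap v a b)).countP (fun u => u b < u a) =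
      snAbove R b a + R.count ((Equiv.swap a b).trans v) := fun R => by
    rw [snAbove, ← Multiset.countP_eq_card_filter]
    refine Multiset.countP_map_update_id_of_not _ ?_ ?_ R <;> simp [Fin.lt_def, hvb, hva]
  have hcS := hcount S
  have hcS' := hcount S'
  rw [hmap, hN, hcS'] at hcS
  exact Sym.coe_injective (Multiset.eq_of_map_update_id_eq hmap (by omega))

lemma ncard_sScT_eq_add_le (hab : a ≠ b) (n c : ℕ) :
    Set.ncard {S : Sym (Vote m) n |
        sScT (S : Multiset (Vote m)) a = sScT (S : Multiset (Vote m)) b + c} ≤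
      (n + m.factorial - 2).choose n := by
  obtain ⟨v, hvb, hva⟩ := exists_vote_top_two hab
  have hcard : Fintype.card (Vote m) = m.factorial := by rw [Fintype.card_perm, Fintype.card_fin]
  rw [← hcard]
  refine Sym.ncard_le_choose_of_injOn_map (w := (Equiv.swap a b).trans v) (fun u => ?_)
    (injOn_sym_map_mergeSwap hvb hva n c)
  by_cases hu : u = (Equiv.swap a b).trans v
  · rw [mergeSwap, hu, update_self]
    intro h
    have := congrArg (fun u : Vote m => (u b : ℕ)) h
    simp only [Equiv.trans_apply, Equiv.swap_apply_right] at this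
    omega
  · rwa [mergeSwap, update_of_ne hu]

end Voting

theorem stmt_8_general {m : ℕ} (n : ℕ) :
    Set.ncard {S : Sym (Vote m) n |
        {x : Fin m | sTWinner (S : Multiset (Vote m)) x} ≠
        {x : Fin m | sQWinner (S : Multiset (Vote m)) x}} ≤
      (m - 1) * m ^ 2 * Nat.choose (n + Nat.factorial m - 2) n := by
  let I := (univ : Finset (Fin m)).offDiag ×ˢ range m
  let F : (Fin m × Fin m) × ℕ → Set (Sym (Vote m) n) := fun i =>
    {S | sScT (S : Multiset (Vote m)) i.1.1 = sScT (S : Multiset (Vote m)) i.1.2 + i.2}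
  have hsub : {S : Sym (Vote m) n | {x | sTWinner (S : Multiset (Vote m)) x} ≠
      {x | sQWinner (S : Multiset (Vote m)) x}} ⊆ ⋃ i ∈ I, F i := fun S hS => by
    obtain ⟨a, b, hab, c, hc, h⟩ := exists_sScT_eq_add_of_winners_ne hS
    exact Set.mem_biUnion (x := ((a, b), c)) (by simp [I, hab, hc]) h
  calc _ ≤ (⋃ i ∈ I, F i).ncard := Set.ncard_le_ncard hsub (Set.toFinite _)
    _ ≤ ∑ i ∈ I, (F i).ncard := I.set_ncard_biUnion_le F
    _ ≤ ∑ i ∈ I, (n + m.factorial - 2).choose n :=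
        sum_le_sum fun i hi => ncard_sScT_eq_add_le (by simpa [I] using (mem_product.1 hi).1) n i.2
    _ = (m - 1) * m ^ 2 * (n + m.factorial - 2).choose n := by
        rw [sum_const, smul_eq_mul, card_product, offDiag_card, card_range, card_univ,
          Fintype.card_fin, ← Nat.sub_one_mul]
        ring

/-- For `n ≥ 1`, the number of voting situations with `n` agents in which the set
of Tideman winners differs from the set of DQ winners is at most
`(m − 1)·m²·C(n + m! − 2, n)`. -/
theorem stmt_8 {m : ℕ} (hm : 2 ≤ m) (n : ℕ) (hn : 1 ≤ n) :
    Set.ncard {S : Sym (Vote m) n |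
        {x : Fin m | sTWinner (S : Multiset (Vote m)) x} ≠
        {x : Fin m | sQWinner (S : Multiset (Vote m)) x}} ≤
      (m - 1) * m ^ 2 * Nat.choose (n + Nat.factorial m - 2) n :=
  stmt_8_general n
end
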